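/- arXiv:1606.00268 — 9 statements merged into one kernel-verified Lean document; each statement's English description precedes it below -/
import Mathlib

section
/- For the double wheel graph DW_n = 2C_n + K_1 with n even, n ≥ 4, there exists a proper 3-colouring whose colouring sum equals 3(n+1), and no proper 3-colouring has a smaller colouring sum; hence the χ-chromatic sum of DW_n is 3(n+1). -/
open Finset

/-- The colouring sum ω(C) = Σ_{i=1}^{k} i·θ(c_i), computed as the sum over
vertices of (colour index + 1). -/
def colSum {V : Type*} [Fintype V] {k : ℕ} (c : V → Fin k) : ℕ :=
  ∑ v, ((c v : ℕ) + 1)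

/-- A proper colouring: adjacent vertices get distinct colours. -/
def IsProper {V : Type*} (G : SimpleGraph V) {k : ℕ} (c : V → Fin k) : Prop :=
  ∀ u v, G.Adj u v → c u ≠ c v

/-- The cycle graph C_n on `Fin n`. -/
def cycleGraph (n : ℕ) : SimpleGraph (Fin n) :=
  SimpleGraph.fromRel (fun i j => (j : ℕ) = ((i : ℕ) + 1) % n)

/-- The double wheel DW_n = 2C_n + K_1: two disjoint n-cycles plus a central
vertex adjacent to all cycle vertices. -/
def doubleWheel (n : ℕ) : SimpleGraph (Fin n ⊕ Fin n ⊕ Unit) :=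
  SimpleGraph.fromRel (fun a b =>
    match a, b with
    | Sum.inl i, Sum.inl j => (j : ℕ) = ((i : ℕ) + 1) % n
    | Sum.inr (Sum.inl i), Sum.inr (Sum.inl j) => (j : ℕ) = ((i : ℕ) + 1) % n
    | _, Sum.inr (Sum.inr _) => True
    | _, _ => False)

/-- The helm graph H_n: wheel C_n + K_1 together with a pendant vertex attached
to each cycle vertex.  `Sum.inl i` are cycle vertices, `Sum.inr (Sum.inl i)`
pendants, `Sum.inr (Sum.inr ())` the centre. -/
def helm (n : ℕ) : SimpleGraph (Fin n ⊕ Fin n ⊕ Unit) :=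
  SimpleGraph.fromRel (fun a b =>
    match a, b with
    | Sum.inl i, Sum.inl j => (j : ℕ) = ((i : ℕ) + 1) % n
    | Sum.inl i, Sum.inr (Sum.inl j) => i = j
    | Sum.inl _, Sum.inr (Sum.inr _) => True
    | _, _ => False)

/-- The sunlet graph S_n = C_n ⊙ K_1: a pendant vertex attached to each vertex
of the cycle C_n. -/
def sunlet (n : ℕ) : SimpleGraph (Fin n ⊕ Fin n) :=
  SimpleGraph.fromRel (fun a b =>
    match a, b with
    | Sum.inl i, Sum.inl j => (j : ℕ) = ((i : ℕ) + 1) % n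
    | Sum.inl i, Sum.inr j => i = j
    | _, _ => False)

/-- The web graph W_n: the prism C_n □ P_2 (inner cycle `inl i`, outer cycle
`inr (inl i)`) with a pendant vertex `inr (inr i)` attached to each outer
cycle vertex. -/
def webGraph (n : ℕ) : SimpleGraph (Fin n ⊕ Fin n ⊕ Fin n) :=
  SimpleGraph.fromRel (fun a b =>
    match a, b with
    | Sum.inl i, Sum.inl j => (j : ℕ) = ((i : ℕ) + 1) % n
    | Sum.inr (Sum.inl i), Sum.inr (Sum.inl j) => (j : ℕ) = ((i : ℕ) + 1) % n
    | Sum.inl i, Sum.inr (Sum.inl j) => i = j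
    | Sum.inr (Sum.inl i), Sum.inr (Sum.inr j) => i = j
    | _, _ => False)

/-- The closed helm CH_3: inner triangle `inl i`, outer triangle `inr (inl i)`,
spokes v_i–u_i, and centre `inr (inr ())` adjacent to the inner triangle. -/
def closedHelm3 : SimpleGraph (Fin 3 ⊕ Fin 3 ⊕ Unit) :=
  SimpleGraph.fromRel (fun a b =>
    match a, b with
    | Sum.inl i, Sum.inl j => (j : ℕ) = ((i : ℕ) + 1) % 3
    | Sum.inr (Sum.inl i), Sum.inr (Sum.inl j) => (j : ℕ) = ((i : ℕ) + 1) % 3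
    | Sum.inl i, Sum.inr (Sum.inl j) => i = j
    | Sum.inl _, Sum.inr (Sum.inr _) => True
    | _, _ => False)

/-- A b-colouring with k colours: a proper k-colouring such that every colour
class contains a vertex adjacent to vertices of all other colours. -/
def IsBColoring {V : Type*} (G : SimpleGraph V) {k : ℕ} (c : V → Fin k) : Prop :=
  IsProper G c ∧
    ∀ i : Fin k, ∃ v, c v = i ∧ ∀ j : Fin k, j ≠ i → ∃ u, G.Adj v u ∧ c u = j



def myc (n : ℕ) : Fin n ⊕ Fin n ⊕ Unit → Fin 3
  | Sum.inl i => ⟨(i : ℕ) % 2, by omega⟩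
  | Sum.inr (Sum.inl i) => ⟨(i : ℕ) % 2, by omega⟩
  | Sum.inr (Sum.inr _) => 2

lemma parity_aux (n : ℕ) (heven : Even n) (i j : Fin n)
    (h : (j : ℕ) = ((i : ℕ) + 1) % n) : (i : ℕ) % 2 ≠ (j : ℕ) % 2 := by
  obtain ⟨k, hk⟩ := heven
  have hi := i.isLt
  rcases Nat.lt_or_ge ((i : ℕ) + 1) n with h1 | h1
  · rw [Nat.mod_eq_of_lt h1] at h; omega
  · have hh : (i : ℕ) + 1 = n := by omega
    rw [hh, Nat.mod_self] at h; omega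

lemma sum_range_mod2 (n : ℕ) : ∑ i ∈ Finset.range n, i % 2 = n / 2 := by
  induction n with
  | zero => simp
  | succ n ih => rw [Finset.sum_range_succ, ih]; omega

lemma cyc_bound (n : ℕ) [NeZero n] (hn : 4 ≤ n) (f : Fin n → Fin 3) (m : Fin 3)
    (hadj : ∀ i : Fin n, f i ≠ f (i + 1)) (hm : ∀ i, f i ≠ m) :
    n * (3 - (m : ℕ)) ≤ 2 * ∑ i, (f i : ℕ) := by
  have key : ∀ a b m : Fin 3, a ≠ b → a ≠ m → b ≠ m →
      3 - (m : ℕ) ≤ (a : ℕ) + (b : ℕ) := by decide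
  have h1 : ∑ i : Fin n, (3 - (m : ℕ)) ≤ ∑ i : Fin n, ((f i : ℕ) + (f (i + 1) : ℕ)) :=
    Finset.sum_le_sum fun i _ => key _ _ _ (hadj i) (hm i) (hm (i + 1))
  have h2 : ∑ i : Fin n, (f (i + 1) : ℕ) = ∑ i : Fin n, (f i : ℕ) :=
    Fintype.sum_equiv (Equiv.addRight (1 : Fin n)) _ _ (fun i => rfl)
  rw [Finset.sum_add_distrib, h2] at h1
  simpa [Finset.sum_const, Finset.card_univ, two_mul, mul_comm] using h1

lemma fin_succ_val (n : ℕ) [NeZero n] (hn : 4 ≤ n) (i : Fin n) :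
    ((i + 1 : Fin n) : ℕ) = ((i : ℕ) + 1) % n := by
  rw [Fin.add_def]
  congr 1
  simp [Fin.val_one', Nat.mod_eq_of_lt (show 1 < n by omega)]

lemma fin_ne_succ (n : ℕ) [NeZero n] (hn : 4 ≤ n) (i : Fin n) : i ≠ i + 1 := by
  intro h
  have h0 := fin_succ_val n hn i
  have hv := congrArg Fin.val h
  have hi := i.isLt
  rcases Nat.lt_or_ge ((i : ℕ) + 1) n with h1 | h1
  · rw [Nat.mod_eq_of_lt h1] at h0; omega
  · have hh : (i : ℕ) + 1 = n := by omega
    rw [hh, Nat.mod_self] at h0; omega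

theorem stmt_2 (n : ℕ) (hn : 4 ≤ n) (heven : Even n) :
    IsLeast {s : ℕ | ∃ c : Fin n ⊕ Fin n ⊕ Unit → Fin 3,
      IsProper (doubleWheel n) c ∧ Function.Surjective c ∧ s = colSum c} (3 * (n + 1)) := by
  haveI : NeZero n := ⟨by omega⟩
  constructor
  · -- membership
    refine ⟨myc n, ?_, ?_, ?_⟩
    · rintro u v hadj
      rw [doubleWheel, SimpleGraph.fromRel_adj] at hadj
      obtain ⟨hne, hrel⟩ := hadj
      have two_ne : ∀ i : Fin n, (⟨(i : ℕ) % 2, by omega⟩ : Fin 3) ≠ 2 := by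
        intro i h
        have := congrArg Fin.val h
        simp at this
        omega
      rcases u with i | i | u <;> rcases v with j | j | v
      · rcases hrel with h | h
        · exact Fin.ne_of_val_ne (parity_aux n heven i j h)
        · exact Fin.ne_of_val_ne (Ne.symm (parity_aux n heven j i h))
      · exact (hrel.elim (fun h => h.elim) (fun h => h.elim) : _)
      · exact two_ne i
      · exact (hrel.elim (fun h => h.elim) (fun h => h.elim) : _)
      · rcases hrel with h | h
        · exact Fin.ne_of_val_ne (parity_aux n heven i j h)
        · exact Fin.ne_of_val_ne (Ne.symm (parity_aux n heven j i h))
      · exact two_ne i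
      · exact (two_ne j).symm
      · exact (two_ne j).symm
      · exact absurd rfl hne
    · intro x
      fin_cases x
      · exact ⟨Sum.inl ⟨0, by omega⟩, by simp [myc]⟩
      · refine ⟨Sum.inl ⟨1, by omega⟩, ?_⟩
        simp [myc]
      · exact ⟨Sum.inr (Sum.inr ()), rfl⟩
    · obtain ⟨k, hk⟩ := heven
      simp only [colSum, Fintype.sum_sum_type, Finset.univ_unique, Finset.sum_singleton, myc]
      have hs : ∑ i : Fin n, ((i : ℕ) % 2) = n / 2 := by
        rw [Fin.sum_univ_eq_sum_range (fun x => x % 2) n, sum_range_mod2]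
      have h2 : ((2 : Fin 3) : ℕ) = 2 := rfl
      simp only [Finset.sum_add_distrib, hs, h2, Finset.sum_const, Finset.card_univ,
        Fintype.card_fin, smul_eq_mul, mul_one]
      omega
  · -- lower bound
    rintro s ⟨c, hprop, hsurj, rfl⟩
    set m : Fin 3 := c (Sum.inr (Sum.inr ())) with hm
    have hadj1 : ∀ i : Fin n, c (Sum.inl i) ≠ c (Sum.inl (i + 1)) := by
      intro i
      apply hprop
      rw [doubleWheel, SimpleGraph.fromRel_adj]
      exact ⟨fun h => fin_ne_succ n hn i (Sum.inl.inj h), Or.inl (fin_succ_val n hn i)⟩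
    have hadj2 : ∀ i : Fin n, c (Sum.inr (Sum.inl i)) ≠ c (Sum.inr (Sum.inl (i + 1))) := by
      intro i
      apply hprop
      rw [doubleWheel, SimpleGraph.fromRel_adj]
      exact ⟨fun h => fin_ne_succ n hn i (Sum.inl.inj (Sum.inr.inj h)),
        Or.inl (fin_succ_val n hn i)⟩
    have hm1 : ∀ i : Fin n, c (Sum.inl i) ≠ m := by
      intro i
      apply hprop
      rw [doubleWheel, SimpleGraph.fromRel_adj]
      exact ⟨by simp, Or.inl trivial⟩
    have hm2 : ∀ i : Fin n, c (Sum.inr (Sum.inl i)) ≠ m := by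
      intro i
      apply hprop
      rw [doubleWheel, SimpleGraph.fromRel_adj]
      exact ⟨by simp, Or.inl trivial⟩
    have hb1 := cyc_bound n hn (fun i => c (Sum.inl i)) m hadj1 hm1
    have hb2 := cyc_bound n hn (fun i => c (Sum.inr (Sum.inl i))) m hadj2 hm2
    have hM : (m : ℕ) < 3 := m.isLt
    simp only [colSum, Fintype.sum_sum_type, Finset.univ_unique, Finset.sum_singleton]
    rw [Finset.sum_add_distrib, Finset.sum_add_distrib]
    simp only [Finset.sum_const, Finset.card_univ, Fintype.card_fin, smul_eq_mul, mul_one]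
    set A := ∑ i : Fin n, (c (Sum.inl i) : ℕ)
    set B := ∑ i : Fin n, (c (Sum.inr (Sum.inl i)) : ℕ)
    set M := (m : ℕ) with hMdef
    interval_cases M <;> omega
end

section
/- For the double wheel graph DW_n with n odd, n ≥ 3, the chromatic number is 4 and the minimum colouring sum over proper 4-colourings equals 3n + 7. -/
/-!
A colour class `S` of a proper colouring of the cycle `C_n` is disjoint from its rotation `S + 1`,
so `2 |S| ≤ n`; for odd `n` this means `|S| ≤ (n - 1) / 2`. Three classes are therefore needed to
cover an odd cycle, and since the hub of `DW_n` sees every rim vertex, `χ(DW_n) = 4`. If the hub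
gets colour `a`, each rim is covered by the three other classes, each of size at most
`(n - 1) / 2`; this linear constraint bounds the rim's colour sum from below, and the four choices
of `a` give `3n + 7` at best, attained with hub colour 4 and rims coloured `1, 2, 1, 2, …, 1, 2, 3`
(colours counted from 1, whereas `Fin 4` counts from 0).
-/

open Finset

theorem Fin.val_add_one_eq_mod {n : ℕ} [NeZero n] (hn : 2 ≤ n) (i : Fin n) :
    ((i + 1 : Fin n) : ℕ) = ((i : ℕ) + 1) % n := by
  rw [Fin.val_add, Fin.val_one', Nat.mod_eq_of_lt hn]

theorem Fin.ne_add_one {n : ℕ} [NeZero n] (hn : 2 ≤ n) (i : Fin n) : i ≠ i + 1 :=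
  left_ne_add.mpr fun h => by simpa [h, Nat.mod_eq_of_lt hn] using Fin.val_one' n

theorem sum_range_two_mul_mod_two_add_one (m : ℕ) :
    ∑ k ∈ range (2 * m), (k % 2 + 1) = 3 * m := by
  induction m with
  | zero => rfl
  | succ m ih =>
    rw [Nat.mul_succ, sum_range_succ, sum_range_succ, ih]
    omega

theorem sum_colour_add_one_eq_sum_card_fiber {V : Type*} [Fintype V] {k : ℕ} (c : V → Fin k) :
    ∑ v, ((c v : ℕ) + 1) = ∑ x : Fin k, ((x : ℕ) + 1) * #{v | c v = x} := by
  rw [← sum_fiberwise' univ c (fun x : Fin k => (x : ℕ) + 1)]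
  simp only [sum_const, smul_eq_mul, mul_comm]

section OddCycle

variable {n : ℕ} [NeZero n]

theorem two_mul_card_le_of_add_one_notMem {s : Finset (Fin n)} (hs : ∀ i ∈ s, i + 1 ∉ s) :
    2 * #s ≤ n := by
  have hdisj : Disjoint s (s.map (Equiv.addRight 1).toEmbedding) := by
    rw [disjoint_left]
    intro _ hi hi'
    obtain ⟨j, hj, rfl⟩ := mem_map.mp hi'
    exact hs j hj hi
  calc 2 * #s = #(s ∪ s.map (Equiv.addRight 1).toEmbedding) := by
        rw [card_union_of_disjoint hdisj, card_map, two_mul]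
    _ ≤ #(univ : Finset (Fin n)) := card_le_univ _
    _ = n := card_fin n

theorem two_mul_card_fiber_le {α : Type*} [DecidableEq α] {f : Fin n → α}
    (hf : ∀ i, f i ≠ f (i + 1)) (x : α) : 2 * #{i | f i = x} ≤ n :=
  two_mul_card_le_of_add_one_notMem fun i hi hi' => hf i <| by
    rw [(mem_filter.mp hi).2, (mem_filter.mp hi').2]

theorem three_le_card_image_of_odd {α : Type*} [DecidableEq α] {f : Fin n → α} (hn : Odd n)
    (hf : ∀ i, f i ≠ f (i + 1)) : 3 ≤ #(univ.image f) := by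
  by_contra! h
  have hfiber : ∀ x ∈ univ.image f, #{i | f i = x} ≤ n / 2 := fun x _ => by
    have := two_mul_card_fiber_le hf x
    omega
  have hle : n ≤ 2 * (n / 2) :=
    calc n = ∑ x ∈ univ.image f, #{i | f i = x} := by rw [← card_eq_sum_card_image, card_fin]
      _ ≤ #(univ.image f) * (n / 2) := sum_le_card_nsmul _ _ _ hfiber
      _ ≤ 2 * (n / 2) := Nat.mul_le_mul_right _ (by omega)
  have := Nat.odd_iff.mp hn
  omega

/-- Sharp for `a = 3`; the slack for smaller `a` lets two rims plus the hub give `3n + 7` whatever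
the hub colour is. -/
theorem three_mul_add_six_le_two_mul_sum_add_one (hn : Odd n) {f : Fin n → Fin 4}
    (hf : ∀ i, f i ≠ f (i + 1)) {a : Fin 4} (ha : ∀ i, f i ≠ a) :
    3 * n + 6 ≤ 2 * ∑ i, ((f i : ℕ) + 1) + a := by
  have hcard : ∑ x : Fin 4, #{i | f i = x} = n := by
    rw [← card_eq_sum_card_fiberwise fun _ _ => mem_univ _, card_fin]
  have hempty : #{i | f i = a} = 0 :=
    card_eq_zero.mpr (filter_eq_empty_iff.mpr fun i _ => ha i)
  have h0 := two_mul_card_fiber_le hf 0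
  have h1 := two_mul_card_fiber_le hf 1
  have h2 := two_mul_card_fiber_le hf 2
  have h3 := two_mul_card_fiber_le hf 3
  have := Nat.odd_iff.mp hn
  rw [sum_colour_add_one_eq_sum_card_fiber]
  simp only [Fin.sum_univ_four] at hcard ⊢
  obtain rfl | rfl | rfl | rfl : a = 0 ∨ a = 1 ∨ a = 2 ∨ a = 3 := by omega
  all_goals simp only [Fin.coe_ofNat_eq_mod]; omega

end OddCycle

section DoubleWheel

variable {n : ℕ}

theorem doubleWheel_adj_inl [NeZero n] (hn : 2 ≤ n) (i : Fin n) :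
    (doubleWheel n).Adj (.inl i) (.inl (i + 1)) := by
  rw [doubleWheel, SimpleGraph.fromRel_adj]
  exact ⟨by simpa using Fin.ne_add_one hn i, .inl (Fin.val_add_one_eq_mod hn i)⟩

theorem doubleWheel_adj_inr_inl [NeZero n] (hn : 2 ≤ n) (i : Fin n) :
    (doubleWheel n).Adj (.inr (.inl i)) (.inr (.inl (i + 1))) := by
  rw [doubleWheel, SimpleGraph.fromRel_adj]
  exact ⟨by simpa using Fin.ne_add_one hn i, .inl (Fin.val_add_one_eq_mod hn i)⟩

theorem doubleWheel_adj_inl_hub (i : Fin n) :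
    (doubleWheel n).Adj (.inl i) (.inr (.inr ())) := by
  rw [doubleWheel, SimpleGraph.fromRel_adj]
  exact ⟨by simp, .inl trivial⟩

theorem doubleWheel_adj_inr_inl_hub (i : Fin n) :
    (doubleWheel n).Adj (.inr (.inl i)) (.inr (.inr ())) := by
  rw [doubleWheel, SimpleGraph.fromRel_adj]
  exact ⟨by simp, .inl trivial⟩

theorem colSum_doubleWheel {k : ℕ} (c : Fin n ⊕ Fin n ⊕ Unit → Fin k) :
    colSum c = ∑ i, ((c (.inl i) : ℕ) + 1) + ∑ i, ((c (.inr (.inl i)) : ℕ) + 1)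
      + ((c (.inr (.inr ())) : ℕ) + 1) := by
  simp only [colSum, Fintype.sum_sum_type, Fintype.sum_unique, add_assoc]

theorem doubleWheel_not_colorable_three (hn : 2 ≤ n) (hodd : Odd n) :
    ¬ (doubleWheel n).Colorable 3 := by
  have : NeZero n := ⟨by omega⟩
  rintro ⟨C⟩
  have hrim := three_le_card_image_of_odd (f := fun i => C (.inl i)) hodd
    fun i => C.valid (doubleWheel_adj_inl hn i)
  have hsub : univ.image (fun i => C (.inl i)) ⊆ univ.erase (C (.inr (.inr ()))) := by
    intro x hx
    obtain ⟨i, -, rfl⟩ := mem_image.mp hx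
    exact mem_erase.mpr ⟨C.valid (doubleWheel_adj_inl_hub i), mem_univ _⟩
  have := card_le_card hsub
  rw [card_erase_of_mem (mem_univ _), card_univ, Fintype.card_fin] at this
  omega

theorem IsProper.three_mul_add_seven_le_colSum [NeZero n] (hn : 2 ≤ n) (hodd : Odd n)
    {c : Fin n ⊕ Fin n ⊕ Unit → Fin 4} (hc : IsProper (doubleWheel n) c) :
    3 * n + 7 ≤ colSum c := by
  have h₁ := three_mul_add_six_le_two_mul_sum_add_one hodd (f := fun i => c (.inl i))
    (fun i => hc _ _ (doubleWheel_adj_inl hn i)) (fun i => hc _ _ (doubleWheel_adj_inl_hub i))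
  have h₂ := three_mul_add_six_le_two_mul_sum_add_one hodd (f := fun i => c (.inr (.inl i)))
    (fun i => hc _ _ (doubleWheel_adj_inr_inl hn i))
    (fun i => hc _ _ (doubleWheel_adj_inr_inl_hub i))
  rw [colSum_doubleWheel]
  omega

def rimColouring (n : ℕ) (i : Fin n) : Fin 4 :=
  if (i : ℕ) + 1 = n then 2 else ⟨i % 2, by omega⟩

def doubleWheelColouring (n : ℕ) : Fin n ⊕ Fin n ⊕ Unit → Fin 4 :=
  Sum.elim (rimColouring n) (Sum.elim (rimColouring n) fun _ => 3)

theorem rimColouring_val (i : Fin n) :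
    (rimColouring n i : ℕ) = if (i : ℕ) + 1 = n then 2 else (i : ℕ) % 2 := by
  unfold rimColouring
  split_ifs <;> rfl

theorem rimColouring_ne (hn : 2 ≤ n) {i j : Fin n} (h : (j : ℕ) = ((i : ℕ) + 1) % n) :
    rimColouring n i ≠ rimColouring n j := by
  have hj : (j : ℕ) = if (i : ℕ) + 1 = n then 0 else (i : ℕ) + 1 := by
    split_ifs with hi
    · rwa [hi, Nat.mod_self] at h
    · rwa [Nat.mod_eq_of_lt (by omega)] at h
  rw [ne_eq, Fin.ext_iff, rimColouring_val, rimColouring_val]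
  split_ifs at hj ⊢ <;> omega

theorem rimColouring_ne_three (i : Fin n) : rimColouring n i ≠ 3 := by
  rw [ne_eq, Fin.ext_iff, rimColouring_val]
  split_ifs <;> simp only [Fin.coe_ofNat_eq_mod] <;> omega

theorem isProper_doubleWheelColouring (hn : 2 ≤ n) :
    IsProper (doubleWheel n) (doubleWheelColouring n) := by
  intro u v huv
  rw [doubleWheel, SimpleGraph.fromRel_adj] at huv
  obtain ⟨hne, h | h⟩ := huv <;> rcases u with i | i | ⟨⟩ <;> rcases v with j | j | ⟨⟩ <;>
    first
    | exact h.elim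
    | exact (hne rfl).elim
    | exact rimColouring_ne hn h
    | exact (rimColouring_ne hn h).symm
    | exact rimColouring_ne_three i
    | exact (rimColouring_ne_three j).symm

theorem surjective_doubleWheelColouring (hn : 3 ≤ n) :
    Function.Surjective (doubleWheelColouring n) := by
  have hrim (k : ℕ) (hk : k < n) : (doubleWheelColouring n (.inl ⟨k, hk⟩) : ℕ) =
      if k + 1 = n then 2 else k % 2 :=
    rimColouring_val _
  intro x
  obtain rfl | rfl | rfl | rfl : x = 0 ∨ x = 1 ∨ x = 2 ∨ x = 3 := by omega
  · exact ⟨.inl ⟨0, by omega⟩, Fin.ext <| by rw [hrim, if_neg (by omega)]; rfl⟩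
  · exact ⟨.inl ⟨1, by omega⟩, Fin.ext <| by rw [hrim, if_neg (by omega)]; rfl⟩
  · exact ⟨.inl ⟨n - 1, by omega⟩, Fin.ext <| by rw [hrim, if_pos (by omega)]; rfl⟩
  · exact ⟨.inr (.inr ()), rfl⟩

theorem sum_rimColouring_add_one (m : ℕ) :
    ∑ i, ((rimColouring (2 * m + 1) i : ℕ) + 1) = 3 * m + 3 := by
  have hcast (i : Fin (2 * m)) : (rimColouring (2 * m + 1) i.castSucc : ℕ) = i % 2 := by
    rw [rimColouring_val, if_neg (by simp only [Fin.val_castSucc]; omega), Fin.val_castSucc]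
  have hlast : (rimColouring (2 * m + 1) (Fin.last _) : ℕ) = 2 := by
    rw [rimColouring_val, if_pos (by simp)]
  rw [Fin.sum_univ_castSucc, hlast]
  simp only [hcast]
  rw [Fin.sum_univ_eq_sum_range (fun k => k % 2 + 1), sum_range_two_mul_mod_two_add_one]

theorem colSum_doubleWheelColouring (hodd : Odd n) :
    colSum (doubleWheelColouring n) = 3 * n + 7 := by
  obtain ⟨m, rfl⟩ := hodd
  rw [colSum_doubleWheel]
  simp only [doubleWheelColouring, Sum.elim_inl, Sum.elim_inr, sum_rimColouring_add_one]
  change 3 * m + 3 + (3 * m + 3) + 4 = 3 * (2 * m + 1) + 7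
  ring

theorem doubleWheel_chromaticNumber (hn : 2 ≤ n) (hodd : Odd n) :
    (doubleWheel n).chromaticNumber = 4 :=
  (SimpleGraph.chromaticNumber_eq_iff_colorable_not_colorable (n := 3)).mpr
    ⟨⟨⟨doubleWheelColouring n, fun h => isProper_doubleWheelColouring hn _ _ h⟩⟩,
      doubleWheel_not_colorable_three hn hodd⟩

end DoubleWheel

theorem stmt_3 (n : ℕ) (hn : 3 ≤ n) (hodd : Odd n) :
    (doubleWheel n).chromaticNumber = 4 ∧
    IsLeast {s : ℕ | ∃ c : Fin n ⊕ Fin n ⊕ Unit → Fin 4,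
      IsProper (doubleWheel n) c ∧ Function.Surjective c ∧ s = colSum c} (3 * n + 7) := by
  have : NeZero n := ⟨by omega⟩
  refine ⟨doubleWheel_chromaticNumber (by omega) hodd,
    ⟨doubleWheelColouring n, isProper_doubleWheelColouring (by omega),
      surjective_doubleWheelColouring hn, (colSum_doubleWheelColouring hodd).symm⟩, ?_⟩
  rintro s ⟨c, hc, -, rfl⟩
  exact hc.three_mul_add_seven_le_colSum (by omega) hodd
end

section
/- For the double wheel graph DW_n with n even, n ≥ 4, the maximum colouring sum over proper 3-colourings equals 5n + 1. -/
open Finset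

lemma fin3_unique : ∀ (h x y z : Fin 3), x ≠ h → y ≠ h → x ≠ y → z ≠ h → z ≠ y → z = x := by decide

lemma fin3_sum : ∀ (h x y : Fin 3), x ≠ h → y ≠ h → x ≠ y → (x:ℕ) + (y:ℕ) + (h:ℕ) = 3 := by decide

lemma sum_alt (A B m : ℕ) : ∑ i ∈ Finset.range (2*m), (if i % 2 = 0 then A else B) = m * (A + B) := by
  induction m with
  | zero => simp
  | succ m ih =>
    have h2 : 2*(m+1) = (2*m)+1+1 := by ring
    rw [h2, Finset.sum_range_succ, Finset.sum_range_succ, ih]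
    have h3 : (2*m) % 2 = 0 := by omega
    have h4 : (2*m+1) % 2 = 1 := by omega
    rw [h3, h4]
    simp
    ring

lemma cycle_alt {n : ℕ} (hn : 4 ≤ n) (d : Fin n → Fin 3) (h : Fin 3)
    (hne : ∀ i, d i ≠ h)
    (hadj : ∀ (i : ℕ) (hi : i + 1 < n), d ⟨i, by omega⟩ ≠ d ⟨i+1, hi⟩) :
    ∀ (i : ℕ) (hi : i < n), d ⟨i, hi⟩ =
      if i % 2 = 0 then d ⟨0, by omega⟩ else d ⟨1, by omega⟩ := by
  intro i
  induction i using Nat.strong_induction_on with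
  | _ i ih =>
    match i with
    | 0 => intro hi; simp
    | 1 => intro hi; simp
    | (k+2) =>
      intro hi
      have hk1 : k + 1 < n := by omega
      have hk : k < n := by omega
      have h1 : d ⟨k+2, hi⟩ = d ⟨k, hk⟩ :=
        fin3_unique h (d ⟨k, hk⟩) (d ⟨k+1, hk1⟩) (d ⟨k+2, hi⟩)
          (hne _) (hne _) (hadj k hk1) (hne _) (Ne.symm (hadj (k+1) hi))
      rw [h1, ih k (by omega) hk]
      have hp : (k+2) % 2 = k % 2 := by omega
      rw [hp]

lemma cycle_sum {n m : ℕ} (hnm : n = 2*m) (d : Fin n → Fin 3) (A B : ℕ)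
    (hd : ∀ i : Fin n, ((d i : ℕ) + 1) = if (i:ℕ) % 2 = 0 then A else B) :
    ∑ i : Fin n, ((d i : ℕ) + 1) = m * (A+B) := by
  subst hnm
  calc ∑ i : Fin (2*m), ((d i : ℕ)+1)
      = ∑ i : Fin (2*m), (if (i:ℕ) % 2 = 0 then A else B) :=
        Finset.sum_congr rfl (fun i _ => hd i)
    _ = ∑ i ∈ Finset.range (2*m), (if i % 2 = 0 then A else B) :=
        Fin.sum_univ_eq_sum_range (fun i => if i % 2 = 0 then A else B) (2*m)
    _ = m * (A + B) := sum_alt A B m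

theorem stmt_4 (n : ℕ) (hn : 4 ≤ n) (heven : Even n) :
    IsGreatest {s : ℕ | ∃ c : Fin n ⊕ Fin n ⊕ Unit → Fin 3,
      IsProper (doubleWheel n) c ∧ Function.Surjective c ∧ s = colSum c} (5 * n + 1) := by
  obtain ⟨m, hm⟩ := heven
  have hnm : n = 2 * m := by omega
  have h2n : (2:ℕ) ∣ n := ⟨m, hnm⟩
  constructor
  · -- membership: witness colouring
    set f : Fin n → Fin 3 := fun i => if (i:ℕ) % 2 = 0 then 1 else 2 with hf
    refine ⟨Sum.elim f (Sum.elim f (fun _ => 0)), ?_, ?_, ?_⟩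
    · -- proper
      have hkey : ∀ i j : Fin n, (j:ℕ) = ((i:ℕ)+1) % n → f i ≠ f j := by
        intro i j hij
        have hpar : (j:ℕ) % 2 ≠ (i:ℕ) % 2 := by
          rw [hij, Nat.mod_mod_of_dvd _ h2n]
          omega
        simp only [hf]
        split_ifs with h1 h2 h2 <;> first | omega | decide
      intro u v hadj
      rw [doubleWheel, SimpleGraph.fromRel_adj] at hadj
      obtain ⟨hne, hr⟩ := hadj
      have hf0 : ∀ i : Fin n, f i ≠ 0 := by
        intro i; simp only [hf]; split_ifs <;> decide
      rcases u with i | i | u <;> rcases v with j | j | v <;>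
        simp only [Sum.elim_inl, Sum.elim_inr] at hr ⊢
      · rcases hr with hr | hr
        · exact hkey i j hr
        · exact (hkey j i hr).symm
      · exact absurd hr (by simp)
      · exact hf0 i
      · exact absurd hr (by simp)
      · rcases hr with hr | hr
        · exact hkey i j hr
        · exact (hkey j i hr).symm
      · exact hf0 i
      · exact (hf0 j).symm
      · exact (hf0 j).symm
      · exact absurd hne (by simp)
    · -- surjective
      intro y
      fin_cases y
      · exact ⟨Sum.inr (Sum.inr ()), rfl⟩
      · refine ⟨Sum.inl ⟨0, by omega⟩, ?_⟩
        simp [hf]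
      · refine ⟨Sum.inl ⟨1, by omega⟩, ?_⟩
        simp [hf]
    · -- sum
      have hd : ∀ i : Fin n, ((f i : ℕ) + 1) = if (i:ℕ) % 2 = 0 then 2 else 3 := by
        intro i; simp only [hf]; split_ifs <;> rfl
      have hc := cycle_sum hnm f 2 3 hd
      unfold colSum
      rw [Fintype.sum_sum_type, Fintype.sum_sum_type]
      simp only [Sum.elim_inl, Sum.elim_inr]
      rw [hc]
      simp
      omega
  · -- upper bound
    rintro s ⟨c, hp, -, hs⟩
    have hadjhub : ∀ v : Fin n ⊕ Fin n ⊕ Unit, v ≠ Sum.inr (Sum.inr ()) →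
        (doubleWheel n).Adj v (Sum.inr (Sum.inr ())) := by
      intro v hv
      rw [doubleWheel, SimpleGraph.fromRel_adj]
      refine ⟨hv, Or.inl ?_⟩
      rcases v with i | i | u <;> trivial
    set h : Fin 3 := c (Sum.inr (Sum.inr ())) with hh
    have hcons : ∀ (i : ℕ) (hi : i + 1 < n),
        (doubleWheel n).Adj (Sum.inl (⟨i, by omega⟩ : Fin n)) (Sum.inl ⟨i+1, hi⟩) ∧
        (doubleWheel n).Adj (Sum.inr (Sum.inl (⟨i, by omega⟩ : Fin n))) (Sum.inr (Sum.inl ⟨i+1, hi⟩)) := by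
      intro i hi
      have hne : (⟨i, by omega⟩ : Fin n) ≠ ⟨i+1, hi⟩ := by
        simp [Fin.ext_iff]
      have hrel : ((⟨i+1, hi⟩ : Fin n) : ℕ) = (((⟨i, by omega⟩ : Fin n) : ℕ) + 1) % n := by
        simp [Nat.mod_eq_of_lt hi]
      constructor <;> (rw [doubleWheel, SimpleGraph.fromRel_adj]; exact ⟨by simpa using hne, Or.inl hrel⟩)
    -- the two cycles
    have main : ∀ d : Fin n → Fin 3, (∀ i, d i ≠ h) →
        (∀ (i : ℕ) (hi : i + 1 < n), d ⟨i, by omega⟩ ≠ d ⟨i+1, hi⟩) →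
        ∃ a b : Fin 3, a ≠ h ∧ b ≠ h ∧ a ≠ b ∧
          ∑ i : Fin n, ((d i : ℕ) + 1) = m * (((a:ℕ)+1) + ((b:ℕ)+1)) := by
      intro d hne hadj
      have halt := cycle_alt hn d h hne hadj
      refine ⟨d ⟨0, by omega⟩, d ⟨1, by omega⟩, hne _, hne _, hadj 0 (by omega), ?_⟩
      refine cycle_sum hnm d _ _ ?_
      intro i
      have := halt (i:ℕ) i.isLt
      rw [Fin.eta] at this
      rw [this]
      split_ifs <;> rfl
    have hne1 : ∀ i : Fin n, c (Sum.inl i) ≠ h :=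
      fun i => hp _ _ (hadjhub _ (by simp))
    have hne2 : ∀ i : Fin n, c (Sum.inr (Sum.inl i)) ≠ h :=
      fun i => hp _ _ (hadjhub _ (by simp))
    obtain ⟨a1, b1, ha1, hb1, hab1, hs1⟩ := main (fun i => c (Sum.inl i)) hne1
      (fun i hi => hp _ _ (hcons i hi).1)
    obtain ⟨a2, b2, ha2, hb2, hab2, hs2⟩ := main (fun i => c (Sum.inr (Sum.inl i))) hne2
      (fun i hi => hp _ _ (hcons i hi).2)
    have hsum1 := fin3_sum h a1 b1 ha1 hb1 hab1
    have hsum2 := fin3_sum h a2 b2 ha2 hb2 hab2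
    have hstot : s = m * (((a1:ℕ)+1) + ((b1:ℕ)+1)) + m * (((a2:ℕ)+1) + ((b2:ℕ)+1)) + ((h:ℕ)+1) := by
      rw [hs]
      unfold colSum
      rw [Fintype.sum_sum_type, Fintype.sum_sum_type]
      rw [hs1, hs2]
      simp
      ring
    have hhlt : (h:ℕ) < 3 := h.isLt
    have e1 : ((a1:ℕ)+1) + ((b1:ℕ)+1) = 5 - (h:ℕ) := by omega
    have e2 : ((a2:ℕ)+1) + ((b2:ℕ)+1) = 5 - (h:ℕ) := by omega
    rw [e1, e2] at hstot
    set k := (h:ℕ) with hk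
    interval_cases k <;> omega
end

section
/- For the double wheel graph DW_n with n odd, n ≥ 3, the maximum colouring sum over proper 4-colourings equals 7n − 2. -/
open Finset

section Aux

lemma fin_add_one_val' {n : ℕ} [NeZero n] (hn : 3 ≤ n) (i : Fin n) :
    ((i + 1 : Fin n) : ℕ) = ((i : ℕ) + 1) % n := by
  have h1 : ((1 : Fin n) : ℕ) = 1 := by
    rw [Fin.val_one']; exact Nat.mod_eq_of_lt (by omega)
  rw [Fin.add_def]
  simp [h1]

lemma fin_succ_ne' {n : ℕ} [NeZero n] (hn : 3 ≤ n) (i : Fin n) : i + 1 ≠ i := by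
  intro h
  have := congrArg Fin.val h
  rw [fin_add_one_val' hn] at this
  have hlt := i.isLt
  by_cases h2 : (i : ℕ) + 1 < n
  · rw [Nat.mod_eq_of_lt h2] at this; omega
  · have heq : ((i:ℕ) + 1) % n = 0 := by
      have : (i:ℕ) + 1 = n := by omega
      simp [this]
    omega

lemma fiber_card_le' {n : ℕ} [NeZero n] (hn : 3 ≤ n) (hodd : Odd n) (g : Fin n → Fin 4)
    (hadj : ∀ i : Fin n, g (i + 1) ≠ g i) (j : Fin 4) :
    (univ.filter (fun i => g i = j)).card ≤ (n - 1) / 2 := by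
  set S := univ.filter (fun i => g i = j) with hS
  have hinj : Function.Injective (fun i : Fin n => i + 1) := add_left_injective 1
  have hdisj : Disjoint S (S.image (fun i => i + 1)) := by
    rw [Finset.disjoint_left]
    rintro x hx hx'
    simp only [Finset.mem_image] at hx'
    obtain ⟨i, hi, rfl⟩ := hx'
    simp only [hS, Finset.mem_filter] at hx hi
    exact hadj i (hx.2.trans hi.2.symm)
  have hcard : S.card + S.card ≤ n := by
    have h1 : (S ∪ S.image (fun i => i + 1)).card ≤ n := by
      have := Finset.card_le_univ (S ∪ S.image (fun i => i + 1))
      simpa using this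
    rw [Finset.card_union_of_disjoint hdisj,
        Finset.card_image_of_injective _ hinj] at h1
    exact h1
  obtain ⟨m, hm⟩ := hodd
  omega

lemma sum_val_eq' {n : ℕ} (g : Fin n → Fin 4) :
    ∑ i : Fin n, (g i : ℕ) =
      ∑ j : Fin 4, (univ.filter (fun i => g i = j)).card * (j : ℕ) := by
  rw [← Finset.sum_fiberwise univ g (fun i => (g i : ℕ))]
  refine Finset.sum_congr rfl fun j _ => ?_
  rw [Finset.sum_congr rfl (fun i hi => ?_), Finset.sum_const, smul_eq_mul]
  simp only [Finset.mem_filter] at hi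
  rw [hi.2]

lemma card_fibers' {n : ℕ} (g : Fin n → Fin 4) :
    ∑ j : Fin 4, (univ.filter (fun i => g i = j)).card = n := by
  have := (Finset.card_eq_sum_card_fiberwise
    (s := (univ : Finset (Fin n))) (t := (univ : Finset (Fin 4)))
    (f := g) (fun i _ => Finset.mem_univ (g i)))
  simpa using this.symm

def gcol (n : ℕ) (i : Fin n) : Fin 4 :=
  if (i : ℕ) = n - 1 then 1 else if Even (i : ℕ) then 3 else 2

def dwc (n : ℕ) : Fin n ⊕ Fin n ⊕ Unit → Fin 4
  | Sum.inl i => gcol n i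
  | Sum.inr (Sum.inl i) => gcol n i
  | Sum.inr (Sum.inr _) => 0

lemma gcol_ne_zero (n : ℕ) (i : Fin n) : gcol n i ≠ 0 := by
  unfold gcol
  split
  · decide
  · split <;> decide

lemma gcol_step {n : ℕ} (hn : 3 ≤ n) (i j : Fin n)
    (h : (j : ℕ) = ((i : ℕ) + 1) % n) : gcol n i ≠ gcol n j := by
  unfold gcol
  have hi := i.isLt
  by_cases h1 : (i : ℕ) = n - 1
  · have hj0 : (j : ℕ) = 0 := by
      rw [h, h1]
      have : n - 1 + 1 = n := by omega
      simp [this]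
    rw [if_pos h1, if_neg (by omega : ¬ ((j:ℕ) = n - 1)),
        if_pos (by rw [hj0]; exact Even.zero)]
    decide
  · have hj1 : (j : ℕ) = (i : ℕ) + 1 := by
      rw [h, Nat.mod_eq_of_lt (by omega)]
    rw [if_neg h1]
    by_cases h2 : (j : ℕ) = n - 1
    · rw [if_pos h2]
      rcases Nat.even_or_odd (i : ℕ) with he | ho
      · rw [if_pos he]; decide
      · rw [if_neg (Nat.not_even_iff_odd.2 ho)]; decide
    · rw [if_neg h2]
      rcases Nat.even_or_odd (i : ℕ) with he | ho
      · rw [if_pos he, if_neg (by rw [hj1]; simpa [Nat.even_add_one] using he)]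
        decide
      · rw [if_neg (Nat.not_even_iff_odd.2 ho),
            if_pos (by rw [hj1]; exact Odd.add_one ho)]
        decide

lemma aux_pair_sum : ∀ h : ℕ, ∑ i ∈ range (2*h), (if Even i then 4 else 3) = 7*h := by
  intro h
  induction h with
  | zero => simp
  | succ k ih =>
    have : 2 * (k+1) = (2*k) + 1 + 1 := by ring
    rw [this, Finset.sum_range_succ, Finset.sum_range_succ, ih]
    have h1 : Even (2*k) := even_two_mul k
    have h2 : ¬ Even (2*k+1) := by simp [Nat.even_add_one, h1]
    rw [if_pos h1, if_neg h2]
    ring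

lemma gcol_sum {n : ℕ} (hn : 3 ≤ n) (hodd : Odd n) :
    ∑ i : Fin n, ((gcol n i : ℕ) + 1) = (7 * n - 3) / 2 := by
  obtain ⟨h, hh⟩ := hodd
  have hcast : ∀ i : Fin n, ((gcol n i : ℕ) + 1)
      = if (i : ℕ) = n - 1 then 2 else if Even (i : ℕ) then 4 else 3 := by
    intro i
    unfold gcol
    by_cases h1 : (i : ℕ) = n - 1
    · rw [if_pos h1, if_pos h1]; decide
    · rcases Nat.even_or_odd (i : ℕ) with he | ho
      · rw [if_neg h1, if_neg h1, if_pos he, if_pos he]; decide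
      · rw [if_neg h1, if_neg h1, if_neg (Nat.not_even_iff_odd.2 ho),
            if_neg (Nat.not_even_iff_odd.2 ho)]; decide
  have hrange := Fin.sum_univ_eq_sum_range
    (fun i : ℕ => if i = n - 1 then 2 else if Even i then 4 else 3) n
  calc ∑ i : Fin n, ((gcol n i : ℕ) + 1)
      = ∑ i : Fin n, (fun i : ℕ => if i = n - 1 then 2 else if Even i then 4 else 3) (i : ℕ) :=
        Finset.sum_congr rfl (fun i _ => hcast i)
    _ = ∑ i ∈ range n, (fun i : ℕ => if i = n - 1 then 2 else if Even i then 4 else 3) i :=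
        hrange
    _ = (7 * n - 3) / 2 := by
        simp only []
        have hn' : n = 2*h + 1 := by omega
        subst hn'
        rw [Finset.sum_range_succ]
        have : ∑ i ∈ range (2*h), (if i = 2*h+1-1 then 2 else if Even i then 4 else 3)
            = ∑ i ∈ range (2*h), (if Even i then 4 else 3) := by
          refine Finset.sum_congr rfl fun i hi => ?_
          rw [Finset.mem_range] at hi
          rw [if_neg (by omega)]
        rw [this, aux_pair_sum]
        rw [if_pos (by omega : 2*h = 2*h+1-1)]
        omega

end Aux

theorem stmt_5 (n : ℕ) (hn : 3 ≤ n) (hodd : Odd n) :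
    IsGreatest {s : ℕ | ∃ c : Fin n ⊕ Fin n ⊕ Unit → Fin 4,
      IsProper (doubleWheel n) c ∧ Function.Surjective c ∧ s = colSum c} (7 * n - 2) := by
  haveI : NeZero n := ⟨by omega⟩
  have hstep := fun i j h => gcol_step (n := n) hn i j h
  constructor
  · -- membership
    refine ⟨dwc n, ?_, ?_, ?_⟩
    · intro u v huv
      rw [doubleWheel, SimpleGraph.fromRel_adj] at huv
      obtain ⟨hne, hrel⟩ := huv
      rcases u with i | i | u <;> rcases v with j | j | v <;> simp only [dwc]
      · rcases hrel with hr | hr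
        · exact hstep i j hr
        · exact (hstep j i hr).symm
      · exact absurd hrel (by simp)
      · exact fun hc => gcol_ne_zero n i hc
      · exact absurd hrel (by simp)
      · rcases hrel with hr | hr
        · exact hstep i j hr
        · exact (hstep j i hr).symm
      · exact fun hc => gcol_ne_zero n i hc
      · exact fun hc => gcol_ne_zero n j hc.symm
      · exact fun hc => gcol_ne_zero n j hc.symm
      · exact absurd (by cases u; cases v; rfl) hne
    · -- surjective
      intro y
      have hy : y = 0 ∨ y = 1 ∨ y = 2 ∨ y = 3 := by
        have : ∀ x : Fin 4, x = 0 ∨ x = 1 ∨ x = 2 ∨ x = 3 := by decide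
        exact this y
      rcases hy with rfl | rfl | rfl | rfl
      · exact ⟨Sum.inr (Sum.inr ()), rfl⟩
      · refine ⟨Sum.inl ⟨n - 1, by omega⟩, ?_⟩
        simp [dwc, gcol]
      · refine ⟨Sum.inl ⟨1, by omega⟩, ?_⟩
        have h1 : ¬ ((1:ℕ) = n - 1) := by omega
        simp [dwc, gcol, h1, Nat.even_iff]
      · refine ⟨Sum.inl ⟨0, by omega⟩, ?_⟩
        have h1 : ¬ ((0:ℕ) = n - 1) := by omega
        simp [dwc, gcol, h1]
    · -- sum value
      have hS := gcol_sum hn hodd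
      have hcol : colSum (dwc n) =
          (∑ i : Fin n, ((gcol n i : ℕ) + 1)) +
          ((∑ i : Fin n, ((gcol n i : ℕ) + 1)) + 1) := by
        unfold colSum
        rw [Fintype.sum_sum_type, Fintype.sum_sum_type]
        simp [dwc]
      rw [hcol, hS]
      obtain ⟨h, hh⟩ := hodd
      omega
  · -- upper bound
    rintro s ⟨c, hp, -, rfl⟩
    obtain ⟨h, hh⟩ := hodd
    set m := c (Sum.inr (Sum.inr ())) with hm
    set g1 : Fin n → Fin 4 := fun i => c (Sum.inl i) with hg1
    set g2 : Fin n → Fin 4 := fun i => c (Sum.inr (Sum.inl i)) with hg2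
    -- adjacency facts
    have hadj_cycle1 : ∀ i : Fin n, g1 (i + 1) ≠ g1 i := by
      intro i
      refine hp (Sum.inl (i + 1)) (Sum.inl i) ?_
      rw [doubleWheel, SimpleGraph.fromRel_adj]
      exact ⟨by simpa using fin_succ_ne' hn i, Or.inr (fin_add_one_val' hn i)⟩
    have hadj_cycle2 : ∀ i : Fin n, g2 (i + 1) ≠ g2 i := by
      intro i
      refine hp (Sum.inr (Sum.inl (i + 1))) (Sum.inr (Sum.inl i)) ?_
      rw [doubleWheel, SimpleGraph.fromRel_adj]
      exact ⟨by simpa using fin_succ_ne' hn i, Or.inr (fin_add_one_val' hn i)⟩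
    have hm1 : ∀ i : Fin n, g1 i ≠ m := by
      intro i
      refine hp (Sum.inl i) (Sum.inr (Sum.inr ())) ?_
      rw [doubleWheel, SimpleGraph.fromRel_adj]
      exact ⟨by simp, Or.inl trivial⟩
    have hm2 : ∀ i : Fin n, g2 i ≠ m := by
      intro i
      refine hp (Sum.inr (Sum.inl i)) (Sum.inr (Sum.inr ())) ?_
      rw [doubleWheel, SimpleGraph.fromRel_adj]
      exact ⟨by simp, Or.inl trivial⟩
    -- fiber card bounds
    have hb1 := fun j => fiber_card_le' hn ⟨h, hh⟩ g1 hadj_cycle1 j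
    have hb2 := fun j => fiber_card_le' hn ⟨h, hh⟩ g2 hadj_cycle2 j
    have hz1 : (univ.filter (fun i => g1 i = m)).card = 0 := by
      rw [Finset.card_eq_zero, Finset.filter_eq_empty_iff]
      exact fun i _ => hm1 i
    have hz2 : (univ.filter (fun i => g2 i = m)).card = 0 := by
      rw [Finset.card_eq_zero, Finset.filter_eq_empty_iff]
      exact fun i _ => hm2 i
    have hs1 : (univ.filter (fun i => g1 i = 0)).card + (univ.filter (fun i => g1 i = 1)).card
        + (univ.filter (fun i => g1 i = 2)).card + (univ.filter (fun i => g1 i = 3)).card = n := by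
      have := card_fibers' g1
      rw [Fin.sum_univ_four] at this
      omega
    have hs2 : (univ.filter (fun i => g2 i = 0)).card + (univ.filter (fun i => g2 i = 1)).card
        + (univ.filter (fun i => g2 i = 2)).card + (univ.filter (fun i => g2 i = 3)).card = n := by
      have := card_fibers' g2
      rw [Fin.sum_univ_four] at this
      omega
    have hv1 : ∑ i : Fin n, (g1 i : ℕ) =
        (univ.filter (fun i => g1 i = 1)).card * 1
        + (univ.filter (fun i => g1 i = 2)).card * 2
        + (univ.filter (fun i => g1 i = 3)).card * 3 := by
      rw [sum_val_eq' g1, Fin.sum_univ_four,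
        show ((0:Fin 4):ℕ) = 0 from rfl, show ((1:Fin 4):ℕ) = 1 from rfl,
        show ((2:Fin 4):ℕ) = 2 from rfl, show ((3:Fin 4):ℕ) = 3 from rfl]
      omega
    have hv2 : ∑ i : Fin n, (g2 i : ℕ) =
        (univ.filter (fun i => g2 i = 1)).card * 1
        + (univ.filter (fun i => g2 i = 2)).card * 2
        + (univ.filter (fun i => g2 i = 3)).card * 3 := by
      rw [sum_val_eq' g2, Fin.sum_univ_four,
        show ((0:Fin 4):ℕ) = 0 from rfl, show ((1:Fin 4):ℕ) = 1 from rfl,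
        show ((2:Fin 4):ℕ) = 2 from rfl, show ((3:Fin 4):ℕ) = 3 from rfl]
      omega
    -- colSum expansion
    have hcol : colSum c = (∑ i : Fin n, (g1 i : ℕ)) + (∑ i : Fin n, (g2 i : ℕ))
        + 2 * n + ((m : ℕ) + 1) := by
      unfold colSum
      rw [Fintype.sum_sum_type, Fintype.sum_sum_type]
      have e1 : ∑ i : Fin n, ((c (Sum.inl i) : ℕ) + 1)
          = (∑ i : Fin n, (g1 i : ℕ)) + n := by
        rw [Finset.sum_add_distrib]
        simp [hg1]
      have e2 : ∑ i : Fin n, ((c (Sum.inr (Sum.inl i)) : ℕ) + 1)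
          = (∑ i : Fin n, (g2 i : ℕ)) + n := by
        rw [Finset.sum_add_distrib]
        simp [hg2]
      rw [e1, e2]
      simp [hm]
      ring
    have hmv : m = 0 ∨ m = 1 ∨ m = 2 ∨ m = 3 := by
      have : ∀ x : Fin 4, x = 0 ∨ x = 1 ∨ x = 2 ∨ x = 3 := by decide
      exact this m
    have hb10 := hb1 0; have hb11 := hb1 1; have hb12 := hb1 2; have hb13 := hb1 3
    have hb20 := hb2 0; have hb21 := hb2 1; have hb22 := hb2 2; have hb23 := hb2 3
    rcases hmv with hme | hme | hme | hme <;>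
      rw [hme] at hz1 hz2 hcol <;>
      simp only [Fin.val_zero, Fin.val_one, Fin.val_two, show ((3:Fin 4):ℕ) = 3 from rfl] at hcol <;>
      omega
end

section
/- For the helm graph H_n with n even, n ≥ 4, the minimum colouring sum over proper 3-colourings equals 3(n+1). -/
open Finset

section Aux

lemma fin3_pair_ge (a b : Fin 3) (h : a ≠ b) : 3 ≤ ((a : ℕ) + 1) + ((b : ℕ) + 1) := by
  revert a b; decide

lemma fin3_exists_two (a b x : Fin 3) (ha : a ≠ x) (hb : b ≠ x) (hab : a ≠ b)
    (hx : (x : ℕ) ≤ 1) : a = 2 ∨ b = 2 := by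
  revert a b x; decide

lemma helm_adj_spoke (n : ℕ) (i : Fin n) :
    (helm n).Adj (Sum.inl i) (Sum.inr (Sum.inl i)) := by
  rw [helm, SimpleGraph.fromRel_adj]
  exact ⟨by simp, Or.inl rfl⟩

lemma helm_adj_hub (n : ℕ) (i : Fin n) :
    (helm n).Adj (Sum.inl i) (Sum.inr (Sum.inr ())) := by
  rw [helm, SimpleGraph.fromRel_adj]
  exact ⟨by simp, Or.inl trivial⟩

lemma helm_adj_cycle (n : ℕ) (i j : Fin n) (hij : i ≠ j)
    (h : (j : ℕ) = ((i : ℕ) + 1) % n) : (helm n).Adj (Sum.inl i) (Sum.inl j) := by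
  rw [helm, SimpleGraph.fromRel_adj]
  exact ⟨by simp [hij], Or.inl h⟩

end Aux

theorem stmt_6 (n : ℕ) (hn : 4 ≤ n) (heven : Even n) :
    IsLeast {s : ℕ | ∃ c : Fin n ⊕ Fin n ⊕ Unit → Fin 3,
      IsProper (helm n) c ∧ Function.Surjective c ∧ s = colSum c} (3 * (n + 1)) := by
  have hn0 : 0 < n := by omega
  obtain ⟨m, hm⟩ := heven
  have h2n : 2 ∣ n := ⟨m, by omega⟩
  constructor
  · -- membership: explicit colouring
    refine ⟨fun a => match a with
      | Sum.inl i => if (i : ℕ) % 2 = 0 then 0 else 1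
      | Sum.inr (Sum.inl i) => if (i : ℕ) % 2 = 0 then 1 else 0
      | Sum.inr (Sum.inr _) => 2, ?_, ?_, ?_⟩
    · intro u v huv
      rw [helm, SimpleGraph.fromRel_adj] at huv
      obtain ⟨hne, hrel⟩ := huv
      rcases u with i | i | u <;> rcases v with j | j | v <;> simp only [] at hrel ⊢
      · -- cycle-cycle
        have hpar : (j : ℕ) % 2 ≠ (i : ℕ) % 2 := by
          rcases hrel with h | h
          · rw [h, Nat.mod_mod_of_dvd _ h2n]; omega
          · rw [h, Nat.mod_mod_of_dvd _ h2n]; omega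
        by_cases hi : (i : ℕ) % 2 = 0 <;> by_cases hj : (j : ℕ) % 2 = 0 <;>
          simp [hi, hj] at hpar ⊢ <;> omega
      · -- cycle-pendant
        rcases hrel with h | h
        · subst h
          by_cases hi : (i : ℕ) % 2 = 0 <;> simp [hi]
        · exact h.elim
      · -- cycle-centre
        by_cases hi : (i : ℕ) % 2 = 0 <;> simp [hi]
      · -- pendant-cycle
        rcases hrel with h | h
        · exact h.elim
        · subst h
          by_cases hj : (j : ℕ) % 2 = 0 <;> simp [hj]
      · exact (Or.elim (hrel : False ∨ False) id id).elim
      · exact (Or.elim (hrel : False ∨ False) id id).elim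
      · -- centre-cycle
        by_cases hj : (j : ℕ) % 2 = 0 <;> simp [hj]
      · exact (Or.elim (hrel : False ∨ False) id id).elim
      · exact (Or.elim (hrel : False ∨ False) id id).elim
    · intro y
      fin_cases y
      · exact ⟨Sum.inl ⟨0, by omega⟩, by simp⟩
      · exact ⟨Sum.inr (Sum.inl ⟨0, by omega⟩), by simp⟩
      · exact ⟨Sum.inr (Sum.inr ()), rfl⟩
    · -- colSum computation
      rw [colSum, Fintype.sum_sum_type, Fintype.sum_sum_type, ← add_assoc,
        ← Finset.sum_add_distrib]
      dsimp only
      have h1 : ∀ i : Fin n,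
          (Fin.val (if (i : ℕ) % 2 = 0 then (0 : Fin 3) else 1) + 1)
          + (Fin.val (if (i : ℕ) % 2 = 0 then (1 : Fin 3) else 0) + 1) = 3 := by
        intro i; by_cases hi : (i : ℕ) % 2 = 0 <;> simp [hi]
      rw [Finset.sum_congr rfl (fun i _ => h1 i)]
      simp
      omega
  · -- lower bound
    rintro s ⟨c, hp, -, rfl⟩
    set x := c (Sum.inr (Sum.inr ())) with hx
    have hsplit : colSum c =
        (∑ i : Fin n, (((c (Sum.inl i) : ℕ) + 1) + ((c (Sum.inr (Sum.inl i)) : ℕ) + 1)))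
        + ((x : ℕ) + 1) := by
      rw [colSum, Fintype.sum_sum_type, Fintype.sum_sum_type, ← add_assoc,
        ← Finset.sum_add_distrib]
      simp [hx]
    have hge3 : ∀ i : Fin n,
        3 ≤ ((c (Sum.inl i) : ℕ) + 1) + ((c (Sum.inr (Sum.inl i)) : ℕ) + 1) :=
      fun i => fin3_pair_ge _ _ (hp _ _ (helm_adj_spoke n i))
    by_cases hx2 : x = 2
    · have : 3 * n ≤ ∑ i : Fin n,
          (((c (Sum.inl i) : ℕ) + 1) + ((c (Sum.inr (Sum.inl i)) : ℕ) + 1)) := by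
        calc 3 * n = ∑ _i : Fin n, 3 := by simp [mul_comm]
        _ ≤ _ := Finset.sum_le_sum (fun i _ => hge3 i)
      rw [hsplit, hx2]
      have : (((2 : Fin 3)) : ℕ) = 2 := rfl
      omega
    · -- centre colour ≤ 1
      have hxle : (x : ℕ) ≤ 1 := by
        have := x.isLt
        have : (x : ℕ) ≠ 2 := fun h => hx2 (Fin.ext (by simp [h]))
        omega
      -- indices 0,1,2,3
      have hlt0 : (0 : ℕ) < n := by omega
      have hlt1 : (1 : ℕ) < n := by omega
      have hlt2 : (2 : ℕ) < n := by omega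
      have hlt3 : (3 : ℕ) < n := by omega
      set i0 : Fin n := ⟨0, hlt0⟩
      set i1 : Fin n := ⟨1, hlt1⟩
      set i2 : Fin n := ⟨2, hlt2⟩
      set i3 : Fin n := ⟨3, hlt3⟩
      have hadj01 : (helm n).Adj (Sum.inl i0) (Sum.inl i1) :=
        helm_adj_cycle n i0 i1 (by simp [i0, i1]) (by simp [i0, i1, Nat.mod_eq_of_lt hlt1])
      have hadj23 : (helm n).Adj (Sum.inl i2) (Sum.inl i3) :=
        helm_adj_cycle n i2 i3 (by simp [i2, i3, Fin.ext_iff])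
          (by simp [i2, i3, Nat.mod_eq_of_lt hlt3])
      have hc0 : c (Sum.inl i0) ≠ x := hp _ _ (helm_adj_hub n i0)
      have hc1 : c (Sum.inl i1) ≠ x := hp _ _ (helm_adj_hub n i1)
      have hc2 : c (Sum.inl i2) ≠ x := hp _ _ (helm_adj_hub n i2)
      have hc3 : c (Sum.inl i3) ≠ x := hp _ _ (helm_adj_hub n i3)
      obtain ⟨a, ha2, hamem⟩ : ∃ a : Fin n, c (Sum.inl a) = 2 ∧ (a = i0 ∨ a = i1) := by
        rcases fin3_exists_two _ _ _ hc0 hc1 (hp _ _ hadj01) hxle with h | h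
        · exact ⟨i0, h, Or.inl rfl⟩
        · exact ⟨i1, h, Or.inr rfl⟩
      obtain ⟨b, hb2, hbmem⟩ : ∃ b : Fin n, c (Sum.inl b) = 2 ∧ (b = i2 ∨ b = i3) := by
        rcases fin3_exists_two _ _ _ hc2 hc3 (hp _ _ hadj23) hxle with h | h
        · exact ⟨i2, h, Or.inl rfl⟩
        · exact ⟨i3, h, Or.inr rfl⟩
      have hab : a ≠ b := by
        rcases hamem with rfl | rfl <;> rcases hbmem with rfl | rfl <;>
          simp [i0, i1, i2, i3, Fin.ext_iff]
      have hkey : ∀ i : Fin n,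
          3 + ((if i = a then 1 else 0) + (if i = b then 1 else 0)) ≤
            ((c (Sum.inl i) : ℕ) + 1) + ((c (Sum.inr (Sum.inl i)) : ℕ) + 1) := by
        intro i
        by_cases hia : i = a
        · subst hia
          rw [if_pos rfl, if_neg hab, ha2]
          have : ((2 : Fin 3) : ℕ) = 2 := rfl
          omega
        · by_cases hib : i = b
          · subst hib
            rw [if_neg hia, if_pos rfl, hb2]
            have : ((2 : Fin 3) : ℕ) = 2 := rfl
            omega
          · rw [if_neg hia, if_neg hib]
            simpa using hge3 i
      have hsum : 3 * n + 2 ≤ ∑ i : Fin n,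
          (((c (Sum.inl i) : ℕ) + 1) + ((c (Sum.inr (Sum.inl i)) : ℕ) + 1)) := by
        calc 3 * n + 2
            = ∑ i : Fin n, (3 + ((if i = a then 1 else 0) + (if i = b then 1 else 0))) := by
              rw [Finset.sum_add_distrib, Finset.sum_add_distrib,
                Finset.sum_ite_eq' Finset.univ a (fun _ => 1),
                Finset.sum_ite_eq' Finset.univ b (fun _ => 1)]
              simp [mul_comm]
          _ ≤ _ := Finset.sum_le_sum (fun i _ => hkey i)
      rw [hsplit]
      omega
end

section
/- For the helm graph H_n with n even, n ≥ 4, the maximum colouring sum over proper 3-colourings equals 5n + 1. -/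
open Finset

lemma fin3_eq : ∀ a b x y : Fin 3, x ≠ a → x ≠ b → y ≠ a → y ≠ b → a ≠ b → x = y := by decide
lemma fin3_zero : ∀ a x y : Fin 3, a ≠ 0 → x ≠ a → y ≠ a → x ≠ y → x = 0 ∨ y = 0 := by decide
lemma fin3_g : ∀ x y : Fin 3, x ≠ y → (x:ℕ)+1 + ((y:ℕ)+1) ≤ (if x = 0 then 4 else 5) := by decide

lemma sumAlt (m A B : ℕ) : ∑ i ∈ Finset.range (2*m), (if i % 2 = 0 then A else B) = m*A + m*B := by
  induction m with
  | zero => simp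
  | succ k ih =>
    have h : 2*(k+1) = 2*k+1+1 := by ring
    rw [h, Finset.sum_range_succ, Finset.sum_range_succ, ih]
    have h1 : (2*k) % 2 = 0 := by omega
    have h2 : (2*k+1) % 2 = 1 := by omega
    simp [h1, h2]; ring

theorem stmt_8 (n : ℕ) (hn : 4 ≤ n) (heven : Even n) :
    IsGreatest {s : ℕ | ∃ c : Fin n ⊕ Fin n ⊕ Unit → Fin 3,
      IsProper (helm n) c ∧ Function.Surjective c ∧ s = colSum c} (5 * n + 1) := by
  obtain ⟨m, hm⟩ := heven
  have hm2 : 2 ≤ m := by omega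
  have hn0 : 0 < n := by omega
  have h2n : 2 ∣ n := ⟨m, by omega⟩
  constructor
  · -- membership
    refine ⟨Sum.elim (fun i : Fin n => if (i:ℕ) % 2 = 0 then (1 : Fin 3) else 2)
      (Sum.elim (fun i : Fin n => if (i:ℕ) % 2 = 0 then (2 : Fin 3) else 1) (fun _ => 0)),
      ?_, ?_, ?_⟩
    · -- proper
      intro u v hadj
      rw [helm, SimpleGraph.fromRel_adj] at hadj
      obtain ⟨hne, hrel⟩ := hadj
      have hpar : ∀ i j : Fin n, (j:ℕ) = ((i:ℕ)+1) % n → (j:ℕ) % 2 ≠ (i:ℕ) % 2 := by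
        intro i j h
        rw [h, Nat.mod_mod_of_dvd _ h2n]
        omega
      rcases u with i | i | u <;> rcases v with j | j | v <;> simp only [] at hrel
      · -- inl inl
        have hp : (j:ℕ) % 2 ≠ (i:ℕ) % 2 := by
          rcases hrel with h | h
          · exact hpar i j h
          · exact fun hc => hpar j i h hc.symm
        simp only [Sum.elim_inl]
        rcases Nat.mod_two_eq_zero_or_one (i:ℕ) with h1 | h1 <;>
          rcases Nat.mod_two_eq_zero_or_one (j:ℕ) with h2 | h2 <;>
          simp [h1, h2] at hp ⊢ <;> omega
      · -- inl, pendant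
        rcases hrel with h | h
        · subst h
          simp only [Sum.elim_inl, Sum.elim_inr]
          split <;> decide
        · exact absurd h (by simp)
      · rcases hrel with h | h
        · simp only [Sum.elim_inl, Sum.elim_inr]
          split <;> decide
        · exact absurd h (by simp)
      · rcases hrel with h | h
        · exact absurd h (by simp)
        · subst h
          simp only [Sum.elim_inl, Sum.elim_inr]
          intro hc
          have := hc.symm
          revert this; split <;> decide
      · exact absurd hrel (by simp)
      · exact absurd hrel (by simp)
      · rcases hrel with h | h
        · exact absurd h (by simp)
        · simp only [Sum.elim_inl, Sum.elim_inr]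
          intro hc
          have := hc.symm
          revert this; split <;> decide
      · exact absurd hrel (by simp)
      · exact absurd hrel (by simp)
    · -- surjective
      intro y
      have h0 : ((⟨0, hn0⟩ : Fin n) : ℕ) % 2 = 0 := by simp
      have hy : y = 0 ∨ y = 1 ∨ y = 2 := by omega
      rcases hy with rfl | rfl | rfl
      · exact ⟨Sum.inr (Sum.inr ()), rfl⟩
      · exact ⟨Sum.inl ⟨0, hn0⟩, by simp [h0]⟩
      · exact ⟨Sum.inr (Sum.inl ⟨0, hn0⟩), by simp [h0]⟩
    · -- value
      rw [colSum, Fintype.sum_sum_type, Fintype.sum_sum_type]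
      simp only [Sum.elim_inl, Sum.elim_inr]
      have hval : ∀ i : Fin n,
          (((if (i:ℕ) % 2 = 0 then (1:Fin 3) else 2) : Fin 3) : ℕ) + 1 +
          ((((if (i:ℕ) % 2 = 0 then (2:Fin 3) else 1) : Fin 3) : ℕ) + 1) = 5 := by
        intro i; split <;> rfl
      have hu : (∑ _x : Unit, (((0:Fin 3)):ℕ) + 1) = 1 := by simp
      have : (∑ i : Fin n, ((((if (i:ℕ) % 2 = 0 then (1:Fin 3) else 2) : Fin 3) : ℕ) + 1)) +
          (∑ i : Fin n, ((((if (i:ℕ) % 2 = 0 then (2:Fin 3) else 1) : Fin 3) : ℕ) + 1)) = 5 * n := by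
        rw [← Finset.sum_add_distrib]
        simp only [hval]
        simp [mul_comm]
      simp only [Finset.univ_unique, Finset.sum_singleton]
      omega
  · -- upper bound
    rintro s ⟨c, hp, -, rfl⟩
    set a := c (Sum.inr (Sum.inr ())) with ha_def
    set F : ℕ → Fin 3 := fun i => c (Sum.inl ⟨i % n, Nat.mod_lt _ hn0⟩) with hF_def
    have hadjc : ∀ x : Fin n, (helm n).Adj (Sum.inl x) (Sum.inr (Sum.inr ())) := by
      intro x; simp [helm, SimpleGraph.fromRel_adj]
    have hadjp : ∀ x : Fin n, (helm n).Adj (Sum.inl x) (Sum.inr (Sum.inl x)) := by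
      intro x; simp [helm, SimpleGraph.fromRel_adj]
    have hadjcy : ∀ i : ℕ, (helm n).Adj (Sum.inl ⟨i % n, Nat.mod_lt _ hn0⟩)
        (Sum.inl ⟨(i+1) % n, Nat.mod_lt _ hn0⟩) := by
      intro i
      simp only [helm, SimpleGraph.fromRel_adj]
      constructor
      · intro h
        have h' : i % n = (i+1) % n := by
          simpa using congrArg (fun x : Fin n ⊕ Fin n ⊕ Unit =>
            match x with | Sum.inl j => (j:ℕ) | _ => 0) h
        have hk : i % n < n := Nat.mod_lt _ hn0
        have hmm : (i % n + 1) % n = (i + 1) % n := Nat.mod_add_mod i n 1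
        by_cases hc : i % n + 1 < n
        · rw [Nat.mod_eq_of_lt hc] at hmm; omega
        · have he : i % n + 1 = n := by omega
          rw [he, Nat.mod_self] at hmm; omega
      · left
        show ((i+1) % n : ℕ) = (i % n + 1) % n
        exact (Nat.mod_add_mod i n 1).symm
    have hFa : ∀ i, F i ≠ a := fun i => hp _ _ (hadjc _)
    have hFs : ∀ i, F (i+1) ≠ F i := by
      intro i
      exact fun h => hp _ _ (hadjcy i) h.symm
    have hF2 : ∀ i, F (i+2) = F i := by
      intro i
      exact fin3_eq a (F (i+1)) _ _ (hFa _) (hFs (i+1)) (hFa i)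
        (fun h => hFs i h.symm) (fun h => hFa (i+1) h.symm)
    have hkey : ∀ k r, F (2*k + r) = F r := by
      intro k
      induction k with
      | zero => intro r; simp
      | succ j ih =>
        intro r
        have : 2*(j+1) + r = (2*j + r) + 2 := by ring
        rw [this, hF2, ih]
    have hFmod : ∀ i, F i = F (i % 2) := by
      intro i
      conv_lhs => rw [← Nat.div_add_mod i 2]
      exact hkey (i/2) (i % 2)
    have hpen : ∀ x : Fin n, c (Sum.inl x) ≠ c (Sum.inr (Sum.inl x)) :=
      fun x => hp _ _ (hadjp x)
    have hcF : ∀ x : Fin n, c (Sum.inl x) = F (x:ℕ) := by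
      intro x
      have hx : (⟨(x:ℕ) % n, Nat.mod_lt _ hn0⟩ : Fin n) = x := Fin.ext (Nat.mod_eq_of_lt x.isLt)
      exact congrArg (fun t => c (Sum.inl t)) hx.symm
    -- main bound
    have hun : ∀ u : Unit, c (Sum.inr (Sum.inr u)) = a := fun u => rfl
    rw [colSum, Fintype.sum_sum_type, Fintype.sum_sum_type]
    simp only [Finset.univ_unique, Finset.sum_singleton, hun]
    have hb : ∀ x : Fin n, ((c (Sum.inl x) : ℕ) + 1) + ((c (Sum.inr (Sum.inl x)) : ℕ) + 1)
        ≤ (if (x:ℕ) % 2 = 0 then (if F 0 = 0 then 4 else 5) else (if F 1 = 0 then 4 else 5)) := by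
      intro x
      have h1 := fin3_g _ _ (hpen x)
      rw [hcF x, hFmod (x:ℕ)] at h1
      rcases Nat.mod_two_eq_zero_or_one (x:ℕ) with h | h <;>
        rw [hcF x, hFmod (x:ℕ), h] <;> rw [h] at h1 <;> simpa using h1
    have hsum : (∑ x : Fin n, ((c (Sum.inl x) : ℕ) + 1)) +
        (∑ x : Fin n, ((c (Sum.inr (Sum.inl x)) : ℕ) + 1)) ≤
        ∑ x : Fin n, (if (x:ℕ) % 2 = 0 then (if F 0 = 0 then 4 else 5) else (if F 1 = 0 then 4 else 5)) := by
      rw [← Finset.sum_add_distrib]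
      exact Finset.sum_le_sum (fun x _ => hb x)
    have hre := Fin.sum_univ_eq_sum_range
      (fun t => if t % 2 = 0 then (if F 0 = 0 then 4 else 5) else (if F 1 = 0 then 4 else 5)) n
    have hre2 : (∑ i ∈ Finset.range n, if i % 2 = 0 then (if F 0 = 0 then 4 else 5)
        else (if F 1 = 0 then 4 else 5))
        = m * (if F 0 = 0 then 4 else 5) + m * (if F 1 = 0 then 4 else 5) := by
      rw [show n = 2*m from by omega]; exact sumAlt m _ _
    rw [hre, hre2] at hsum
    have haval : (a:ℕ) < 3 := a.isLt
    by_cases ha : a = 0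
    · have hg0 : (if F 0 = 0 then 4 else 5) = 5 := by
        rw [if_neg]; rw [← ha]; exact hFa 0
      have hg1 : (if F 1 = 0 then 4 else 5) = 5 := by
        rw [if_neg]; rw [← ha]; exact hFa 1
      rw [hg0, hg1] at hsum
      have : (a:ℕ) = 0 := by rw [ha]; rfl
      omega
    · have h01 : F 0 = 0 ∨ F 1 = 0 := by
        refine fin3_zero a (F 0) (F 1) ha (hFa 0) (hFa 1) (fun h => hFs 0 h.symm)
      have hg0 : (if F 0 = 0 then 4 else 5) ≤ 5 := by split <;> omega
      have hg1 : (if F 1 = 0 then 4 else 5) ≤ 5 := by split <;> omega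
      have h9 : (if F 0 = 0 then 4 else 5) + (if F 1 = 0 then 4 else 5) ≤ 9 := by
        rcases h01 with h | h <;> simp [h] <;> omega
      have : m * (if F 0 = 0 then 4 else 5) + m * (if F 1 = 0 then 4 else 5) ≤ 9 * m := by
        calc m * (if F 0 = 0 then 4 else 5) + m * (if F 1 = 0 then 4 else 5)
            = m * ((if F 0 = 0 then 4 else 5) + (if F 1 = 0 then 4 else 5)) := by ring
          _ ≤ m * 9 := Nat.mul_le_mul_left m h9
          _ = 9 * m := by ring
      omega
end

section
/- For the web graph W_n with n ≥ 5, the b-chromatic number of W_n equals 5; in particular there exists a proper 5-colouring in which each colour class contains a vertex adjacent to vertices of all other four colours, and no such b-colouring with more than 5 colours exists since Δ(W_n) + 1 = 5. -/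
open Finset

namespace Web16

lemma succ_char {n i j : ℕ} (hi : i < n) (h : j = (i+1) % n) :
    (i + 1 < n ∧ j = i + 1) ∨ (i = n - 1 ∧ j = 0) := by
  rcases lt_or_ge (i+1) n with h1 | h1
  · left; exact ⟨h1, by rw [h, Nat.mod_eq_of_lt h1]⟩
  · right
    have : i + 1 = n := by omega
    rw [h, this, Nat.mod_self]
    omega

lemma pred_eq {n u v : ℕ} (hu : u < n) (hv : v < n) (h : v = (u+1) % n) :
    u = (v + n - 1) % n := by
  rcases succ_char hu h with ⟨h1, h2⟩ | ⟨h1, h2⟩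
  · have e : v + n - 1 = u + n := by omega
    rw [e, Nat.add_mod_right, Nat.mod_eq_of_lt hu]
  · have e : (v + n - 1) % n = n - 1 := by
      rw [h2, Nat.zero_add]; exact Nat.mod_eq_of_lt (by omega)
    omega

lemma adj_oo {n : ℕ} (i j : Fin n) (h : (j:ℕ) = ((i:ℕ)+1) % n) (hne : (i:ℕ) ≠ (j:ℕ)) :
    (webGraph n).Adj (.inr (.inl i)) (.inr (.inl j)) := by
  rw [webGraph, SimpleGraph.fromRel_adj]
  exact ⟨by simp [Fin.ext_iff, hne], Or.inl h⟩

lemma adj_oi {n : ℕ} (i : Fin n) :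
    (webGraph n).Adj (.inr (.inl i)) (.inl i) := by
  rw [webGraph, SimpleGraph.fromRel_adj]
  exact ⟨by simp, Or.inr rfl⟩

lemma adj_op {n : ℕ} (i : Fin n) :
    (webGraph n).Adj (.inr (.inl i)) (.inr (.inr i)) := by
  rw [webGraph, SimpleGraph.fromRel_adj]
  exact ⟨by simp, Or.inl rfl⟩

lemma nbhd {n : ℕ} (hn : 5 ≤ n) (v : Fin n ⊕ Fin n ⊕ Fin n) :
    ∃ a b c d, ∀ u, (webGraph n).Adj v u → u = a ∨ u = b ∨ u = c ∨ u = d := by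
  have npos : 0 < n := by omega
  obtain v | v | v := v
  · refine ⟨.inl ⟨((v:ℕ)+1) % n, Nat.mod_lt _ npos⟩, .inl ⟨((v:ℕ)+n-1) % n, Nat.mod_lt _ npos⟩,
      .inr (.inl v), .inr (.inl v), ?_⟩
    intro u hu
    rw [webGraph, SimpleGraph.fromRel_adj] at hu
    obtain u | u | u := u
    · rcases hu.2 with h | h
      · left; simp only [Sum.inl.injEq, Fin.ext_iff]; exact h
      · right; left
        simp only [Sum.inl.injEq, Fin.ext_iff]
        exact pred_eq u.isLt v.isLt h
    · right; right; left
      rcases hu.2 with h | h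
      · simp only at h; rw [h]
      · exact absurd h (by simp)
    · exfalso; rcases hu.2 with h | h <;> simp at h
  · refine ⟨.inr (.inl ⟨((v:ℕ)+1) % n, Nat.mod_lt _ npos⟩),
      .inr (.inl ⟨((v:ℕ)+n-1) % n, Nat.mod_lt _ npos⟩),
      .inl v, .inr (.inr v), ?_⟩
    intro u hu
    rw [webGraph, SimpleGraph.fromRel_adj] at hu
    obtain u | u | u := u
    · right; right; left
      rcases hu.2 with h | h
      · exact absurd h (by simp)
      · simp only at h; rw [h]
    · rcases hu.2 with h | h
      · left; simp only [Sum.inr.injEq, Sum.inl.injEq, Fin.ext_iff]; exact h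
      · right; left
        simp only [Sum.inr.injEq, Sum.inl.injEq, Fin.ext_iff]
        exact pred_eq u.isLt v.isLt h
    · right; right; right
      rcases hu.2 with h | h
      · simp only at h; rw [h]
      · exact absurd h (by simp)
  · refine ⟨.inr (.inl v), .inr (.inl v), .inr (.inl v), .inr (.inl v), ?_⟩
    intro u hu
    rw [webGraph, SimpleGraph.fromRel_adj] at hu
    obtain u | u | u := u
    · exfalso; rcases hu.2 with h | h <;> simp at h
    · left
      rcases hu.2 with h | h
      · exact absurd h (by simp)
      · simp only at h; rw [h]
    · exfalso; rcases hu.2 with h | h <;> simp at h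

def gN (i : ℕ) : ℕ := if i ≤ 4 then i else if i % 2 = 1 then 2 else 3

def fN (n i : ℕ) : ℕ :=
  if n = 5 then (i + 2) % 5
  else if i = 0 then 4 else if i = 1 then 3 else if i = 2 then 4
  else if i = 3 then 0 else if i = 4 then 1 else if i % 2 = 1 then 0 else 1

def pN (n i : ℕ) : ℕ :=
  if i = 0 then (if n = 5 then 3 else if n % 2 = 0 then 3 else 2)
  else if i = 1 then 4 else if i = 2 then 0 else if i = 3 then 1
  else if i = 4 then (if n = 5 then 2 else 0) else 0

lemma gN_lt (i : ℕ) : gN i < 5 := by unfold gN; split_ifs <;> first | omega | exact (‹False›).elim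
lemma fN_lt (n i : ℕ) : fN n i < 5 := by unfold fN; split_ifs <;> first | omega | exact (‹False›).elim
lemma pN_lt (n i : ℕ) : pN n i < 5 := by unfold pN; split_ifs <;> first | omega | exact (‹False›).elim

lemma gN_ne {n i j : ℕ} (hn : 5 ≤ n) (hi : i < n) (hj : j < n) (h : j = (i+1) % n) :
    gN i ≠ gN j := by
  rcases succ_char hi h with ⟨h1, h2⟩ | ⟨h1, h2⟩ <;>
    · subst h2; unfold gN; split_ifs <;> first | omega | exact (‹False›).elim

set_option maxHeartbeats 1000000 in
lemma fN_ne {n i j : ℕ} (hn : 5 ≤ n) (hi : i < n) (hj : j < n) (h : j = (i+1) % n) :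
    fN n i ≠ fN n j := by
  rcases succ_char hi h with ⟨h1, h2⟩ | ⟨h1, h2⟩ <;>
    · subst h2; unfold fN; split_ifs <;> first | omega | (exfalso; assumption)

lemma fg_ne {n i : ℕ} (hn : 5 ≤ n) (hi : i < n) : fN n i ≠ gN i := by
  unfold fN gN; split_ifs <;> first | omega | exact (‹False›).elim

lemma pg_ne {n i : ℕ} (hn : 5 ≤ n) (hi : i < n) : pN n i ≠ gN i := by
  unfold pN gN; split_ifs <;> first | omega | exact (‹False›).elim

def col (n : ℕ) : (Fin n ⊕ Fin n ⊕ Fin n) → Fin 5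
  | Sum.inl i => ⟨fN n i, fN_lt n i⟩
  | Sum.inr (Sum.inl i) => ⟨gN i, gN_lt i⟩
  | Sum.inr (Sum.inr i) => ⟨pN n i, pN_lt n i⟩

lemma col_proper {n : ℕ} (hn : 5 ≤ n) :
    ∀ u v, (webGraph n).Adj u v → col n u ≠ col n v := by
  intro u v hadj
  rw [webGraph, SimpleGraph.fromRel_adj] at hadj
  obtain u | u | u := u <;> obtain v | v | v := v <;>
    simp only [col, ne_eq, Fin.mk.injEq] <;>
    rcases hadj.2 with h | h <;> simp only at h <;>
    first
      | exact fN_ne hn u.isLt v.isLt h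
      | exact fun e => (fN_ne hn v.isLt u.isLt h) e.symm
      | exact gN_ne hn u.isLt v.isLt h
      | exact fun e => (gN_ne hn v.isLt u.isLt h) e.symm
      | (cases h; first
          | exact fg_ne hn u.isLt
          | exact fun e => (fg_ne hn u.isLt) e.symm
          | exact fg_ne hn v.isLt
          | exact fun e => (fg_ne hn v.isLt) e.symm
          | exact pg_ne hn u.isLt
          | exact fun e => (pg_ne hn u.isLt) e.symm
          | exact pg_ne hn v.isLt
          | exact fun e => (pg_ne hn v.isLt) e.symm)

lemma adj_succ {n : ℕ} (hn : 5 ≤ n) (a : ℕ) (ha : a + 1 < n) :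
    (webGraph n).Adj (.inr (.inl ⟨a, by omega⟩)) (.inr (.inl ⟨a+1, ha⟩)) :=
  adj_oo _ _ ((Nat.mod_eq_of_lt ha).symm) (by show a ≠ a + 1; omega)

set_option maxHeartbeats 2000000 in
lemma col_b {n : ℕ} (hn : 5 ≤ n) :
    ∀ i : Fin 5, ∃ v, col n v = i ∧
      ∀ j : Fin 5, j ≠ i → ∃ u, (webGraph n).Adj v u ∧ col n u = j := by
  have hwrap : (webGraph n).Adj (.inr (.inl (⟨0, by omega⟩ : Fin n)))
      (.inr (.inl (⟨n - 1, by omega⟩ : Fin n))) := by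
    refine (adj_oo (⟨n - 1, by omega⟩ : Fin n) (⟨0, by omega⟩ : Fin n) ?_ (by show n - 1 ≠ 0; omega)).symm
    show (0:ℕ) = (n - 1 + 1) % n
    have h : n - 1 + 1 = n := by omega
    rw [h, Nat.mod_self]
  intro i
  fin_cases i
  · -- colour 0
    refine ⟨Sum.inr (Sum.inl (⟨0, by omega⟩ : Fin n)), Fin.ext (show gN 0 = 0 by unfold gN; split_ifs <;> first | omega | exact (‹False›).elim), ?_⟩
    intro j hj
    fin_cases j
    · exact absurd rfl hj
    · exact ⟨Sum.inr (Sum.inl (⟨1, by omega⟩ : Fin n)), adj_succ hn 0 (by omega), Fin.ext (show gN 1 = 1 by unfold gN; split_ifs <;> first | omega | exact (‹False›).elim)⟩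
    · rcases eq_or_ne n 5 with h5 | h5
      · exact ⟨Sum.inl (⟨0, by omega⟩ : Fin n), adj_oi _, Fin.ext (show fN n 0 = 2 by unfold fN; split_ifs <;> first | omega | exact (‹False›).elim)⟩
      · rcases Nat.mod_two_eq_zero_or_one n with hp | hp
        · exact ⟨Sum.inr (Sum.inl (⟨n - 1, by omega⟩ : Fin n)), hwrap, Fin.ext (show gN (n - 1) = 2 by unfold gN; split_ifs <;> first | omega | exact (‹False›).elim)⟩
        · exact ⟨Sum.inr (Sum.inr (⟨0, by omega⟩ : Fin n)), adj_op _, Fin.ext (show pN n 0 = 2 by unfold pN; split_ifs <;> first | omega | exact (‹False›).elim)⟩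
    · rcases eq_or_ne n 5 with h5 | h5
      · exact ⟨Sum.inr (Sum.inr (⟨0, by omega⟩ : Fin n)), adj_op _, Fin.ext (show pN n 0 = 3 by unfold pN; split_ifs <;> first | omega | exact (‹False›).elim)⟩
      · rcases Nat.mod_two_eq_zero_or_one n with hp | hp
        · exact ⟨Sum.inr (Sum.inr (⟨0, by omega⟩ : Fin n)), adj_op _, Fin.ext (show pN n 0 = 3 by unfold pN; split_ifs <;> first | omega | exact (‹False›).elim)⟩
        · exact ⟨Sum.inr (Sum.inl (⟨n - 1, by omega⟩ : Fin n)), hwrap, Fin.ext (show gN (n - 1) = 3 by unfold gN; split_ifs <;> first | omega | exact (‹False›).elim)⟩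
    · rcases eq_or_ne n 5 with h5 | h5
      · exact ⟨Sum.inr (Sum.inl (⟨n - 1, by omega⟩ : Fin n)), hwrap, Fin.ext (show gN (n - 1) = 4 by unfold gN; split_ifs <;> first | omega | exact (‹False›).elim)⟩
      · exact ⟨Sum.inl (⟨0, by omega⟩ : Fin n), adj_oi _, Fin.ext (show fN n 0 = 4 by unfold fN; split_ifs <;> first | omega | exact (‹False›).elim)⟩
  · -- colour 1
    refine ⟨Sum.inr (Sum.inl (⟨1, by omega⟩ : Fin n)), Fin.ext (show gN 1 = 1 by unfold gN; split_ifs <;> first | omega | exact (‹False›).elim), ?_⟩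
    intro j hj
    fin_cases j
    · exact ⟨Sum.inr (Sum.inl (⟨0, by omega⟩ : Fin n)), (adj_succ hn 0 (by omega)).symm, Fin.ext (show gN 0 = 0 by unfold gN; split_ifs <;> first | omega | exact (‹False›).elim)⟩
    · exact absurd rfl hj
    · exact ⟨Sum.inr (Sum.inl (⟨2, by omega⟩ : Fin n)), adj_succ hn 1 (by omega), Fin.ext (show gN 2 = 2 by unfold gN; split_ifs <;> first | omega | exact (‹False›).elim)⟩
    · exact ⟨Sum.inl (⟨1, by omega⟩ : Fin n), adj_oi _, Fin.ext (show fN n 1 = 3 by unfold fN; split_ifs <;> first | omega | exact (‹False›).elim)⟩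
    · exact ⟨Sum.inr (Sum.inr (⟨1, by omega⟩ : Fin n)), adj_op _, Fin.ext (show pN n 1 = 4 by unfold pN; split_ifs <;> first | omega | exact (‹False›).elim)⟩
  · -- colour 2
    refine ⟨Sum.inr (Sum.inl (⟨2, by omega⟩ : Fin n)), Fin.ext (show gN 2 = 2 by unfold gN; split_ifs <;> first | omega | exact (‹False›).elim), ?_⟩
    intro j hj
    fin_cases j
    · exact ⟨Sum.inr (Sum.inr (⟨2, by omega⟩ : Fin n)), adj_op _, Fin.ext (show pN n 2 = 0 by unfold pN; split_ifs <;> first | omega | exact (‹False›).elim)⟩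
    · exact ⟨Sum.inr (Sum.inl (⟨1, by omega⟩ : Fin n)), (adj_succ hn 1 (by omega)).symm, Fin.ext (show gN 1 = 1 by unfold gN; split_ifs <;> first | omega | exact (‹False›).elim)⟩
    · exact absurd rfl hj
    · exact ⟨Sum.inr (Sum.inl (⟨3, by omega⟩ : Fin n)), adj_succ hn 2 (by omega), Fin.ext (show gN 3 = 3 by unfold gN; split_ifs <;> first | omega | exact (‹False›).elim)⟩
    · exact ⟨Sum.inl (⟨2, by omega⟩ : Fin n), adj_oi _, Fin.ext (show fN n 2 = 4 by unfold fN; split_ifs <;> first | omega | exact (‹False›).elim)⟩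
  · -- colour 3
    refine ⟨Sum.inr (Sum.inl (⟨3, by omega⟩ : Fin n)), Fin.ext (show gN 3 = 3 by unfold gN; split_ifs <;> first | omega | exact (‹False›).elim), ?_⟩
    intro j hj
    fin_cases j
    · exact ⟨Sum.inl (⟨3, by omega⟩ : Fin n), adj_oi _, Fin.ext (show fN n 3 = 0 by unfold fN; split_ifs <;> first | omega | exact (‹False›).elim)⟩
    · exact ⟨Sum.inr (Sum.inr (⟨3, by omega⟩ : Fin n)), adj_op _, Fin.ext (show pN n 3 = 1 by unfold pN; split_ifs <;> first | omega | exact (‹False›).elim)⟩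
    · exact ⟨Sum.inr (Sum.inl (⟨2, by omega⟩ : Fin n)), (adj_succ hn 2 (by omega)).symm, Fin.ext (show gN 2 = 2 by unfold gN; split_ifs <;> first | omega | exact (‹False›).elim)⟩
    · exact absurd rfl hj
    · exact ⟨Sum.inr (Sum.inl (⟨4, by omega⟩ : Fin n)), adj_succ hn 3 (by omega), Fin.ext (show gN 4 = 4 by unfold gN; split_ifs <;> first | omega | exact (‹False›).elim)⟩
  · -- colour 4
    refine ⟨Sum.inr (Sum.inl (⟨4, by omega⟩ : Fin n)), Fin.ext (show gN 4 = 4 by unfold gN; split_ifs <;> first | omega | exact (‹False›).elim), ?_⟩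
    intro j hj
    fin_cases j
    · rcases eq_or_ne n 5 with h5 | h5
      · refine ⟨Sum.inr (Sum.inl (⟨0, by omega⟩ : Fin n)), ?_, Fin.ext (show gN 0 = 0 by unfold gN; split_ifs <;> first | omega | exact (‹False›).elim)⟩
        refine adj_oo _ _ ?_ (by show (4:ℕ) ≠ 0; omega)
        show (0:ℕ) = (4+1) % n
        rw [h5]
      · exact ⟨Sum.inr (Sum.inr (⟨4, by omega⟩ : Fin n)), adj_op _, Fin.ext (show pN n 4 = 0 by unfold pN; split_ifs <;> first | omega | exact (‹False›).elim)⟩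
    · exact ⟨Sum.inl (⟨4, by omega⟩ : Fin n), adj_oi _, Fin.ext (show fN n 4 = 1 by unfold fN; split_ifs <;> first | omega | exact (‹False›).elim)⟩
    · rcases eq_or_ne n 5 with h5 | h5
      · exact ⟨Sum.inr (Sum.inr (⟨4, by omega⟩ : Fin n)), adj_op _, Fin.ext (show pN n 4 = 2 by unfold pN; split_ifs <;> first | omega | exact (‹False›).elim)⟩
      · refine ⟨Sum.inr (Sum.inl (⟨5, by omega⟩ : Fin n)), adj_succ hn 4 (by omega), ?_⟩
        rw [show col n (Sum.inr (Sum.inl (⟨5, by omega⟩ : Fin n))) = ⟨gN 5, gN_lt 5⟩ from rfl]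
        apply Fin.ext
        show gN 5 = 2
        unfold gN; split_ifs <;> first | omega | exact (‹False›).elim
    · exact ⟨Sum.inr (Sum.inl (⟨3, by omega⟩ : Fin n)), (adj_succ hn 3 (by omega)).symm, Fin.ext (show gN 3 = 3 by unfold gN; split_ifs <;> first | omega | exact (‹False›).elim)⟩
    · exact absurd rfl hj

lemma card_four {V : Type*} [DecidableEq V] (a b c d : V) :
    ({a, b, c, d} : Finset V).card ≤ 4 := by
  have h1 := Finset.card_insert_le a ({b, c, d} : Finset V)
  have h2 := Finset.card_insert_le b ({c, d} : Finset V)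
  have h3 := Finset.card_insert_le c ({d} : Finset V)
  have h4 : ({d} : Finset V).card = 1 := Finset.card_singleton d
  omega

lemma maxdeg {n : ℕ} (hn : 5 ≤ n) (inst : DecidableRel (webGraph n).Adj) :
    (webGraph n).maxDegree + 1 = 5 := by
  letI := inst
  have hle : (webGraph n).maxDegree ≤ 4 := by
    apply SimpleGraph.maxDegree_le_of_forall_degree_le
    intro v
    obtain ⟨a, b, c, d, h⟩ := nbhd hn v
    have hsub : (webGraph n).neighborFinset v ⊆ {a, b, c, d} := by
      intro u hu
      rw [SimpleGraph.mem_neighborFinset] at hu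
      rcases h u hu with h | h | h | h <;> simp [h]
    exact le_trans (Finset.card_le_card hsub) (card_four a b c d)
  have hge : 4 ≤ (webGraph n).maxDegree := by
    refine le_trans ?_
      (SimpleGraph.degree_le_maxDegree (G := webGraph n) (Sum.inr (Sum.inl (⟨0, by omega⟩ : Fin n))))
    have hwrap : (webGraph n).Adj (.inr (.inl (⟨0, by omega⟩ : Fin n)))
        (.inr (.inl (⟨n - 1, by omega⟩ : Fin n))) := by
      refine (adj_oo (⟨n - 1, by omega⟩ : Fin n) (⟨0, by omega⟩ : Fin n) ?_
        (by show n - 1 ≠ 0; omega)).symm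
      show (0:ℕ) = (n - 1 + 1) % n
      have h : n - 1 + 1 = n := by omega
      rw [h, Nat.mod_self]
    have hsub : ({Sum.inl (⟨0, by omega⟩ : Fin n),
        Sum.inr (Sum.inl (⟨1, by omega⟩ : Fin n)),
        Sum.inr (Sum.inl (⟨n - 1, by omega⟩ : Fin n)),
        Sum.inr (Sum.inr (⟨0, by omega⟩ : Fin n))} :
          Finset (Fin n ⊕ Fin n ⊕ Fin n)) ⊆
        (webGraph n).neighborFinset (Sum.inr (Sum.inl (⟨0, by omega⟩ : Fin n))) := by
      intro u hu
      simp only [Finset.mem_insert, Finset.mem_singleton] at hu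
      rw [SimpleGraph.mem_neighborFinset]
      rcases hu with h | h | h | h <;> subst h
      · exact adj_oi _
      · exact adj_succ hn 0 (by omega)
      · exact hwrap
      · exact adj_op _
    have hcard : ({Sum.inl (⟨0, by omega⟩ : Fin n),
        Sum.inr (Sum.inl (⟨1, by omega⟩ : Fin n)),
        Sum.inr (Sum.inl (⟨n - 1, by omega⟩ : Fin n)),
        Sum.inr (Sum.inr (⟨0, by omega⟩ : Fin n))} :
          Finset (Fin n ⊕ Fin n ⊕ Fin n)).card = 4 := by
      rw [Finset.card_insert_of_notMem (by simp),
        Finset.card_insert_of_notMem (by simp [Fin.ext_iff]; omega),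
        Finset.card_insert_of_notMem (by simp),
        Finset.card_singleton]
    calc (4:ℕ) = _ := hcard.symm
      _ ≤ _ := Finset.card_le_card hsub
  omega

lemma upper {n : ℕ} (hn : 5 ≤ n) {k : ℕ}
    (c : Fin n ⊕ Fin n ⊕ Fin n → Fin k)
    (hb : ∀ i : Fin k, ∃ v, c v = i ∧
      ∀ j : Fin k, j ≠ i → ∃ u, (webGraph n).Adj v u ∧ c u = j) :
    k ≤ 5 := by
  by_contra hgt
  push_neg at hgt
  obtain ⟨v, hv, hns⟩ := hb ⟨5, by omega⟩
  have H : ∀ m : Fin 5, ∃ u, (webGraph n).Adj v u ∧ c u = ⟨m.val, by omega⟩ := by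
    intro m
    refine hns ⟨m.val, by omega⟩ ?_
    simp only [ne_eq, Fin.mk.injEq]
    omega
  choose f hf1 hf2 using H
  obtain ⟨a, b, c2, d, h⟩ := nbhd hn v
  have hmap : ∀ m : Fin 5, f m ∈ ({a, b, c2, d} : Finset (Fin n ⊕ Fin n ⊕ Fin n)) := by
    intro m
    rcases h _ (hf1 m) with h | h | h | h <;> simp [h]
  have hinj : Function.Injective f := by
    intro m1 m2 he
    have h1 := hf2 m1
    rw [he, hf2 m2] at h1
    have := congrArg Fin.val h1
    simp only at this
    exact Fin.ext this.symm
  have hc : (Finset.univ : Finset (Fin 5)).card ≤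
      ({a, b, c2, d} : Finset (Fin n ⊕ Fin n ⊕ Fin n)).card :=
    Finset.card_le_card_of_injOn f (fun m _ => hmap m) hinj.injOn
  have h4 := card_four a b c2 d
  simp only [Finset.card_univ, Fintype.card_fin] at hc
  omega

end Web16

theorem stmt_16 (n : ℕ) (hn : 5 ≤ n) :
    (letI : DecidableRel (webGraph n).Adj := Classical.decRel _
     (webGraph n).maxDegree + 1 = 5) ∧
    IsGreatest {k : ℕ | ∃ c : Fin n ⊕ Fin n ⊕ Fin n → Fin k,
      IsBColoring (webGraph n) c} 5 := by
  refine ⟨Web16.maxdeg hn (Classical.decRel _),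
    ⟨Web16.col n, Web16.col_proper hn, Web16.col_b hn⟩, ?_⟩
  rintro k ⟨c, hc, hb⟩
  exact Web16.upper hn c hb
end

section
/- The web graph W_3 has b-chromatic number 4. -/
open Finset

noncomputable instance webAdjDec (n : ℕ) : DecidableRel (webGraph n).Adj := fun a b => by
  unfold webGraph
  rw [SimpleGraph.fromRel_adj]
  rcases a with i | i | i <;> rcases b with j | j | j <;> exact inferInstance

/-- Explicit b-colouring of W_3 with 4 colours. -/
def webCol : Fin 3 ⊕ Fin 3 ⊕ Fin 3 → Fin 4
  | Sum.inl i => ![0,1,2] i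
  | Sum.inr (Sum.inl i) => ![2,3,0] i
  | Sum.inr (Sum.inr i) => ![1,0,1] i

lemma web_outer_of_big_nbhd (v : Fin 3 ⊕ Fin 3 ⊕ Fin 3)
    (h : 5 ≤ (Finset.univ.filter (fun u => (webGraph 3).Adj v u ∨ u = v)).card) :
    ∃ a, v = Sum.inr (Sum.inl a) := by
  revert h; revert v; decide

theorem stmt_17 :
    IsGreatest {k : ℕ | ∃ c : Fin 3 ⊕ Fin 3 ⊕ Fin 3 → Fin k,
      IsBColoring (webGraph 3) c} 4 := by
  constructor
  · exact ⟨webCol, by unfold IsBColoring IsProper; decide⟩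
  · rintro k ⟨c, hp, hb⟩
    by_contra hlt
    push_neg at hlt
    have hbv : ∀ i : Fin k, ∃ v, c v = i ∧ ∃ a, v = Sum.inr (Sum.inl a) := by
      intro i
      obtain ⟨v, hv, hnb⟩ := hb i
      refine ⟨v, hv, web_outer_of_big_nbhd v ?_⟩
      have hall : ∀ j : Fin k, ∃ u, ((webGraph 3).Adj v u ∨ u = v) ∧ c u = j := by
        intro j
        by_cases hj : j = i
        · exact ⟨v, Or.inr rfl, hj ▸ hv⟩
        · obtain ⟨u, hu, hcu⟩ := hnb j hj
          exact ⟨u, Or.inl hu, hcu⟩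
      choose f hf1 hf2 using hall
      have hinj : Function.Injective f := fun a b hab => by
        rw [← hf2 a, ← hf2 b, hab]
      have hcard : k ≤ (Finset.univ.filter
          fun u => (webGraph 3).Adj v u ∨ u = v).card := by
        calc k = (Finset.univ : Finset (Fin k)).card := by simp
          _ ≤ _ := Finset.card_le_card_of_injOn f
              (fun j _ => Finset.mem_filter.2 ⟨Finset.mem_univ _, hf1 j⟩) hinj.injOn
      omega
    choose v hc a hv using hbv
    have hainj : Function.Injective a := by
      intro i i' h
      have : v i = v i' := by rw [hv i, hv i', h]
      rw [← hc i, this, hc i']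
    have := Fintype.card_le_of_injective a hainj
    simp at this
    omega
end

section
/- For the closed helm graph CH_3, there exists a b-colouring with 4 colours attaining colouring sum 16, and this is the minimum over all b-colourings of CH_3 with 4 colours; hence the b-chromatic sum of CH_3 is 16. -/
open Finset

def relB : (Fin 3 ⊕ Fin 3 ⊕ Unit) → (Fin 3 ⊕ Fin 3 ⊕ Unit) → Bool
  | Sum.inl i, Sum.inl j => (j : ℕ) == ((i : ℕ) + 1) % 3
  | Sum.inr (Sum.inl i), Sum.inr (Sum.inl j) => (j : ℕ) == ((i : ℕ) + 1) % 3
  | Sum.inl i, Sum.inr (Sum.inl j) => i == j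
  | Sum.inl _, Sum.inr (Sum.inr _) => true
  | _, _ => false

instance : DecidableRel closedHelm3.Adj := fun a b =>
  decidable_of_iff (a ≠ b ∧ (relB a b ∨ relB b a)) (by
    rcases a with i | i | u <;> rcases b with j | j | w <;>
      simp [closedHelm3, SimpleGraph.fromRel_adj, relB])

def myCol : Fin 3 ⊕ Fin 3 ⊕ Unit → Fin 4
  | Sum.inl i => ![0,1,2] i
  | Sum.inr (Sum.inl i) => ![1,2,0] i
  | Sum.inr (Sum.inr _) => 3

instance {V : Type*} [Fintype V] (G : SimpleGraph V)
    [DecidableRel G.Adj] {k : ℕ} (c : V → Fin k) : Decidable (IsProper G c) := by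
  unfold IsProper; infer_instance

instance {V : Type*} [Fintype V] (G : SimpleGraph V)
    [DecidableRel G.Adj] {k : ℕ} (c : V → Fin k) : Decidable (IsBColoring G c) := by
  unfold IsBColoring; infer_instance

lemma four_distinct : ∀ a b c d : Fin 4, a ≠ b → a ≠ c → a ≠ d → b ≠ c → b ≠ d →
    c ≠ d → 10 ≤ ((a : ℕ) + 1) + ((b : ℕ) + 1) + ((c : ℕ) + 1) + ((d : ℕ) + 1) := by
  intro a b c d h1 h2 h3 h4 h5 h6
  have := a.isLt; have := b.isLt; have := c.isLt; have := d.isLt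
  have n1 := Fin.val_ne_of_ne h1; have n2 := Fin.val_ne_of_ne h2
  have n3 := Fin.val_ne_of_ne h3; have n4 := Fin.val_ne_of_ne h4
  have n5 := Fin.val_ne_of_ne h5; have n6 := Fin.val_ne_of_ne h6
  omega

lemma three_distinct : ∀ a b c : Fin 4, a ≠ b → a ≠ c → b ≠ c →
    6 ≤ ((a : ℕ) + 1) + ((b : ℕ) + 1) + ((c : ℕ) + 1) := by
  intro a b c h1 h2 h3
  have := a.isLt; have := b.isLt; have := c.isLt
  have n1 := Fin.val_ne_of_ne h1; have n2 := Fin.val_ne_of_ne h2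
  have n3 := Fin.val_ne_of_ne h3
  omega

set_option maxRecDepth 4000 in
theorem stmt_19 :
    IsLeast {s : ℕ | ∃ c : Fin 3 ⊕ Fin 3 ⊕ Unit → Fin 4,
      IsBColoring closedHelm3 c ∧ s = colSum c} 16 := by
  constructor
  · exact ⟨myCol, by decide, by decide⟩
  · rintro s ⟨c, ⟨hp, -⟩, rfl⟩
    have A := fun u v h => hp u v (Decidable.of_not_not h)
    have h1 := A (Sum.inl 0) (Sum.inl 1) (by decide)
    have h2 := A (Sum.inl 0) (Sum.inl 2) (by decide)
    have h3 := A (Sum.inl 0) (Sum.inr (Sum.inr ())) (by decide)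
    have h4 := A (Sum.inl 1) (Sum.inl 2) (by decide)
    have h5 := A (Sum.inl 1) (Sum.inr (Sum.inr ())) (by decide)
    have h6 := A (Sum.inl 2) (Sum.inr (Sum.inr ())) (by decide)
    have h7 := A (Sum.inr (Sum.inl 0)) (Sum.inr (Sum.inl 1)) (by decide)
    have h8 := A (Sum.inr (Sum.inl 0)) (Sum.inr (Sum.inl 2)) (by decide)
    have h9 := A (Sum.inr (Sum.inl 1)) (Sum.inr (Sum.inl 2)) (by decide)
    have H1 := four_distinct _ _ _ _ h1 h2 h3 h4 h5 h6
    have H2 := three_distinct _ _ _ h7 h8 h9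
    have : colSum c = ((c (Sum.inl 0) : ℕ) + 1) + ((c (Sum.inl 1) : ℕ) + 1) +
        ((c (Sum.inl 2) : ℕ) + 1) + ((c (Sum.inr (Sum.inl 0)) : ℕ) + 1) +
        ((c (Sum.inr (Sum.inl 1)) : ℕ) + 1) + ((c (Sum.inr (Sum.inl 2)) : ℕ) + 1) +
        ((c (Sum.inr (Sum.inr ())) : ℕ) + 1) := by
      simp [colSum, Fintype.sum_sum_type, Fin.sum_univ_three]
      ring
    omega
end
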